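/- arXiv:0707.2306 — 11 statements merged into one kernel-verified Lean document; each statement's English description precedes it below -/
import Mathlib

section
/- Let E be a finite set and C an 𝔽₂-linear subspace of 𝔽₂^E. For every complex number t, the sum over all cosets D of C in 𝔽₂^E of |hwe(D;t)|² equals ∑_{x ∈ C} (t + t̄)^{|x|} (|t|² + 1)^{|E| − |x|}, where t̄ denotes the complex conjugate of t. -/
open Finset

/-- Hamming weight of a vector over `ZMod 2`: the number of nonzero coordinates. -/
noncomputable def hammingWt {E : Type*} (x : E → ZMod 2) : ℕ :=
  Nat.card {e : E // x e ≠ 0}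

section aux
variable {E : Type*} [Fintype E] [DecidableEq E]

private lemma wt_eq (x : E → ZMod 2) :
    hammingWt x = (univ.filter (fun e => x e ≠ 0)).card := by
  simp [hammingWt, Nat.card_eq_fintype_card, Fintype.card_subtype]

private lemma pow_eq_prod (x : E → ZMod 2) (s : ℂ) :
    s ^ (Fintype.card E - hammingWt x) = ∏ e, (if x e = 0 then s else 1) := by
  rw [Finset.prod_ite, Finset.prod_const, Finset.prod_const, one_pow, mul_one]
  congr 1
  have h : (univ.filter fun e => x e = 0) = univ \ (univ.filter fun e => x e ≠ 0) := by
    ext e; simp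
  rw [wt_eq, h, card_sdiff_of_subset (filter_subset _ _), card_univ]

private lemma key (t : ℂ) (c : E → ZMod 2) :
    ∑ x : E → ZMod 2, t ^ (Fintype.card E - hammingWt x) *
      ((starRingEnd ℂ) t) ^ (Fintype.card E - hammingWt (x + c)) =
    (t + (starRingEnd ℂ) t) ^ hammingWt c *
      (t * (starRingEnd ℂ) t + 1) ^ (Fintype.card E - hammingWt c) := by
  have hstep : ∀ x : E → ZMod 2,
      t ^ (Fintype.card E - hammingWt x) *
        ((starRingEnd ℂ) t) ^ (Fintype.card E - hammingWt (x + c)) =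
      ∏ e, ((if x e = 0 then t else 1) *
        (if x e + c e = 0 then (starRingEnd ℂ) t else 1)) := by
    intro x
    rw [pow_eq_prod, pow_eq_prod, ← Finset.prod_mul_distrib]
    simp [Pi.add_apply]
  simp only [hstep]
  rw [← Fintype.prod_sum (fun e (a : ZMod 2) =>
    (if a = 0 then t else 1) * (if a + c e = 0 then (starRingEnd ℂ) t else 1))]
  have hcoord : ∀ e : E,
      (∑ a : ZMod 2, (if a = 0 then t else 1) * (if a + c e = 0 then (starRingEnd ℂ) t else 1))
      = if c e = 0 then t * (starRingEnd ℂ) t + 1 else t + (starRingEnd ℂ) t := by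
    intro e
    have : (univ : Finset (ZMod 2)) = {0, 1} := by decide
    rw [this, Finset.sum_insert (by decide), Finset.sum_singleton]
    rcases (by decide : ∀ a : ZMod 2, a = 0 ∨ a = 1) (c e) with h | h <;>
      rw [h] <;>
      simp [show ((1:ZMod 2)+1 = 0) from by decide, show ((1:ZMod 2) ≠ 0) from by decide] <;>
      ring
  have hsplit : (univ.filter fun e => c e = 0).card + (univ.filter fun e => ¬ c e = 0).card
      = Fintype.card E := by
    simpa using Finset.card_filter_add_card_filter_not
      (s := (univ : Finset E)) (p := fun e => c e = 0)
  have hwt : (univ.filter fun e => ¬ c e = 0).card = hammingWt c := by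
    simp only [wt_eq, ne_eq]
  have hc1 : (univ.filter fun e => c e = 0).card = Fintype.card E - hammingWt c := by
    omega
  rw [Finset.prod_congr rfl fun e _ => hcoord e]
  rw [Finset.prod_ite, Finset.prod_const, Finset.prod_const, hc1, hwt, mul_comm]
end aux

/-- The sum over all cosets `D` of `C` in `𝔽₂^E` of `|hwe(D;t)|²` equals
`∑_{x ∈ C} (t + conj t)^{|x|} (|t|² + 1)^{|E| − |x|}`. -/
theorem stmt_0 {E : Type*} [Fintype E] [DecidableEq E]
    (C : Submodule (ZMod 2) (E → ZMod 2))
    [Fintype ((E → ZMod 2) ⧸ C)] [DecidableEq ((E → ZMod 2) ⧸ C)]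
    [DecidablePred (· ∈ C)] (t : ℂ) :
    ∑ D : (E → ZMod 2) ⧸ C,
      (∑ x ∈ univ.filter (fun x : E → ZMod 2 =>
            (Submodule.Quotient.mk x : (E → ZMod 2) ⧸ C) = D),
          t ^ (Fintype.card E - hammingWt x)) *
        (starRingEnd ℂ)
          (∑ x ∈ univ.filter (fun x : E → ZMod 2 =>
              (Submodule.Quotient.mk x : (E → ZMod 2) ⧸ C) = D),
            t ^ (Fintype.card E - hammingWt x)) =
      ∑ x ∈ univ.filter (fun x : E → ZMod 2 => x ∈ C),
        (t + (starRingEnd ℂ) t) ^ hammingWt x *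
          (t * (starRingEnd ℂ) t + 1) ^ (Fintype.card E - hammingWt x) := by
  classical
  set f : (E → ZMod 2) → ℂ := fun x => t ^ (Fintype.card E - hammingWt x) with hf
  have haddself : ∀ x : E → ZMod 2, x + x = 0 := by
    intro x; funext e; exact CharTwo.add_self_eq_zero (x e)
  have hmemiff : ∀ x y : E → ZMod 2,
      (Submodule.Quotient.mk y : (E → ZMod 2) ⧸ C) = Submodule.Quotient.mk x ↔ x + y ∈ C := by
    intro x y
    rw [Submodule.Quotient.eq]
    have : y - x = x + y := by
      funext e; simp [Pi.sub_apply, Pi.add_apply, CharTwo.sub_eq_add, add_comm]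
    rw [this]
  -- step 1: expand the product of sums into a double sum
  have step1 : ∀ D : (E → ZMod 2) ⧸ C,
      (∑ x ∈ univ.filter (fun x : E → ZMod 2 =>
          (Submodule.Quotient.mk x : (E → ZMod 2) ⧸ C) = D), f x) *
        (starRingEnd ℂ) (∑ x ∈ univ.filter (fun x : E → ZMod 2 =>
          (Submodule.Quotient.mk x : (E → ZMod 2) ⧸ C) = D), f x) =
      ∑ x ∈ univ.filter (fun x : E → ZMod 2 =>
          (Submodule.Quotient.mk x : (E → ZMod 2) ⧸ C) = D),
        (f x * (starRingEnd ℂ) (∑ y ∈ univ.filter (fun y : E → ZMod 2 =>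
          (Submodule.Quotient.mk y : (E → ZMod 2) ⧸ C) =
            (Submodule.Quotient.mk x : (E → ZMod 2) ⧸ C)), f y)) := by
    intro D
    rw [Finset.sum_mul]
    refine Finset.sum_congr rfl fun x hx => ?_
    rw [mem_filter] at hx
    rw [hx.2]
  simp only [step1]
  rw [Finset.sum_fiberwise_of_maps_to (fun x _ => Finset.mem_univ _)]
  -- step 2: rewrite the inner conjugated sum as a sum over C via y = x + c
  have step2 : ∀ x : E → ZMod 2,
      f x * (starRingEnd ℂ) (∑ y ∈ univ.filter (fun y : E → ZMod 2 =>
        (Submodule.Quotient.mk y : (E → ZMod 2) ⧸ C) =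
          (Submodule.Quotient.mk x : (E → ZMod 2) ⧸ C)), f y) =
      ∑ c ∈ univ.filter (fun c : E → ZMod 2 => c ∈ C),
        t ^ (Fintype.card E - hammingWt x) *
          ((starRingEnd ℂ) t) ^ (Fintype.card E - hammingWt (x + c)) := by
    intro x
    rw [map_sum, Finset.mul_sum]
    refine Finset.sum_nbij' (i := fun y => x + y) (j := fun c => x + c) ?_ ?_ ?_ ?_ ?_
    · intro y hy
      rw [mem_filter] at hy ⊢
      exact ⟨mem_univ _, (hmemiff x y).mp hy.2⟩
    · intro c hc
      rw [mem_filter] at hc ⊢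
      refine ⟨mem_univ _, (hmemiff x (x + c)).mpr ?_⟩
      rw [← add_assoc, haddself, zero_add]; exact hc.2
    · intro y _; rw [← add_assoc, haddself, zero_add]
    · intro c _; rw [← add_assoc, haddself, zero_add]
    · intro y _
      rw [← add_assoc, haddself, zero_add, hf]
      simp [map_pow]
  simp only [step2]
  rw [Finset.sum_comm]
  refine Finset.sum_congr rfl fun c _ => ?_
  exact key t c
end

section
/- Let E be a finite set and C an 𝔽₂-linear subspace of 𝔽₂^E. For every complex number t, the sum over all cosets D of C in 𝔽₂^E of hwe(D;t)³ equals ∑_{(a,b) ∈ C × C} (t(t+1))^{|a ∨ b|} (t³ + 1)^{|E| − |a ∨ b|}, where |a ∨ b| denotes the number of coordinates e ∈ E in which a_e ≠ 0 or b_e ≠ 0. -/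
open Finset

/-- Number of coordinates where `a` or `b` is nonzero. -/
noncomputable def supUnionWt {E : Type*} (a b : E → ZMod 2) : ℕ :=
  Nat.card {e : E // a e ≠ 0 ∨ b e ≠ 0}

lemma sumZ2 (g : ZMod 2 → ℂ) : ∑ v : ZMod 2, g v = g 0 + g 1 := by
  have : (univ : Finset (ZMod 2)) = {0, 1} := by decide
  rw [this, Finset.sum_insert (by decide), Finset.sum_singleton]

lemma coordSum (a b : ZMod 2) (t : ℂ) :
    ∑ v : ZMod 2, ((if v + a = 0 then t else 1) * (if v = 0 then t else 1) * (if v + b = 0 then t else 1))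
      = if a ≠ 0 ∨ b ≠ 0 then t * (t + 1) else t ^ 3 + 1 := by
  rw [sumZ2]
  have h : ∀ c : ZMod 2, c = 0 ∨ c = 1 := by decide
  have h2 : (1 : ZMod 2) + 1 = 0 := by decide
  rcases h a with ha | ha <;> rcases h b with hb | hb <;> subst ha <;> subst hb <;>
    simp [h2, (by decide : (1:ZMod 2) ≠ 0), (by decide : (0:ZMod 2) + 1 = 1)] <;> ring

lemma prodIte {E : Type*} [Fintype E] (p : E → Prop) [DecidablePred p] (A B : ℂ) :
    ∏ e, (if p e then A else B) = A ^ (univ.filter p).card * B ^ (Fintype.card E - (univ.filter p).card) := by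
  rw [Finset.prod_ite, Finset.prod_const, Finset.prod_const]
  congr 1
  have h := Finset.card_filter_add_card_filter_not (s := (univ : Finset E)) (p := p)
  simp only [Finset.card_univ] at h
  congr 1
  omega

lemma fProd {E : Type*} [Fintype E] (x : E → ZMod 2) (t : ℂ) :
    t ^ (Fintype.card E - hammingWt x) = ∏ e, (if x e = 0 then t else 1) := by
  classical
  rw [prodIte, one_pow, mul_one]
  congr 1
  have h := Finset.card_filter_add_card_filter_not (s := (univ : Finset E)) (p := fun e => x e = 0)
  simp only [Finset.card_univ] at h
  have hw : hammingWt x = (univ.filter (fun e => ¬ x e = 0)).card := by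
    rw [hammingWt, Nat.card_eq_fintype_card, Fintype.card_subtype]
  omega

lemma keyPair {E : Type*} [Fintype E] [DecidableEq E] (a b : E → ZMod 2) (t : ℂ) :
    ∑ x : E → ZMod 2, (t ^ (Fintype.card E - hammingWt (x + a)) * t ^ (Fintype.card E - hammingWt x)
        * t ^ (Fintype.card E - hammingWt (x + b)))
      = (t * (t + 1)) ^ supUnionWt a b * (t ^ 3 + 1) ^ (Fintype.card E - supUnionWt a b) := by
  classical
  have hw : supUnionWt a b = (univ.filter (fun e => a e ≠ 0 ∨ b e ≠ 0)).card := by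
    rw [supUnionWt, Nat.card_eq_fintype_card, Fintype.card_subtype]
  rw [hw, ← prodIte]
  simp_rw [fProd, Pi.add_apply, ← Finset.prod_mul_distrib]
  rw [← Fintype.piFinset_univ, ← Finset.prod_univ_sum
    (t := fun _ : E => (univ : Finset (ZMod 2)))
    (f := fun e v => (if v + a e = 0 then t else 1) * (if v = 0 then t else 1) * (if v + b e = 0 then t else 1))]
  exact Finset.prod_congr rfl fun e _ => coordSum (a e) (b e) t

lemma cosetSum {E : Type*} [Fintype E] [DecidableEq E]
    (C : Submodule (ZMod 2) (E → ZMod 2)) [DecidableEq ((E → ZMod 2) ⧸ C)]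
    [DecidablePred (· ∈ C)] (x : E → ZMod 2) (h : (E → ZMod 2) → ℂ) :
    ∑ y ∈ univ.filter (fun y : E → ZMod 2 =>
        (Submodule.Quotient.mk y : (E → ZMod 2) ⧸ C) = Submodule.Quotient.mk x),
      h y = ∑ a ∈ univ.filter (fun a : E → ZMod 2 => a ∈ C), h (x + a) := by
  refine Finset.sum_nbij' (fun y => y - x) (fun a => x + a) ?_ ?_ ?_ ?_ ?_
  · intro y hy
    simp only [mem_filter, mem_univ, true_and] at hy ⊢
    exact (Submodule.Quotient.eq C).mp hy
  · intro a ha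
    simp only [mem_filter, mem_univ, true_and] at ha ⊢
    rw [Submodule.Quotient.eq]
    simpa using ha
  · intro y _; ring
  · intro a _; ring
  · intro y _; congr 1; ring

/-- The sum over all cosets `D` of `C` in `𝔽₂^E` of `hwe(D;t)³` equals
`∑_{(a,b) ∈ C × C} (t(t+1))^{|a ∨ b|} (t³ + 1)^{|E| − |a ∨ b|}`. -/
theorem stmt_2 {E : Type*} [Fintype E] [DecidableEq E]
    (C : Submodule (ZMod 2) (E → ZMod 2))
    [Fintype ((E → ZMod 2) ⧸ C)] [DecidableEq ((E → ZMod 2) ⧸ C)]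
    [DecidablePred (· ∈ C)] (t : ℂ) :
    ∑ D : (E → ZMod 2) ⧸ C,
      (∑ x ∈ univ.filter (fun x : E → ZMod 2 =>
            (Submodule.Quotient.mk x : (E → ZMod 2) ⧸ C) = D),
          t ^ (Fintype.card E - hammingWt x)) ^ 3 =
      ∑ a ∈ univ.filter (fun a : E → ZMod 2 => a ∈ C),
        ∑ b ∈ univ.filter (fun b : E → ZMod 2 => b ∈ C),
          (t * (t + 1)) ^ supUnionWt a b *
            (t ^ 3 + 1) ^ (Fintype.card E - supUnionWt a b) := by
  classical
  set f : (E → ZMod 2) → ℂ := fun x => t ^ (Fintype.card E - hammingWt x) with hf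
  set CF := univ.filter (fun a : E → ZMod 2 => a ∈ C) with hCF
  calc
    ∑ D : (E → ZMod 2) ⧸ C,
        (∑ x ∈ univ.filter (fun x : E → ZMod 2 =>
          (Submodule.Quotient.mk x : (E → ZMod 2) ⧸ C) = D), f x) ^ 3
      = ∑ D : (E → ZMod 2) ⧸ C, ∑ x ∈ univ.filter (fun x : E → ZMod 2 =>
          (Submodule.Quotient.mk x : (E → ZMod 2) ⧸ C) = D),
          f x * (∑ y ∈ univ.filter (fun y : E → ZMod 2 =>
            (Submodule.Quotient.mk y : (E → ZMod 2) ⧸ C) = Submodule.Quotient.mk x), f y) ^ 2 := by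
        refine Finset.sum_congr rfl fun D _ => ?_
        rw [show (∑ x ∈ univ.filter (fun x : E → ZMod 2 =>
            (Submodule.Quotient.mk x : (E → ZMod 2) ⧸ C) = D), f x) ^ 3 =
          (∑ x ∈ univ.filter (fun x : E → ZMod 2 =>
            (Submodule.Quotient.mk x : (E → ZMod 2) ⧸ C) = D), f x) *
          (∑ x ∈ univ.filter (fun x : E → ZMod 2 =>
            (Submodule.Quotient.mk x : (E → ZMod 2) ⧸ C) = D), f x) ^ 2 by ring,
          Finset.sum_mul]
        refine Finset.sum_congr rfl fun x hx => ?_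
        simp only [mem_filter, mem_univ, true_and] at hx
        rw [hx]
    _ = ∑ x : E → ZMod 2, f x * (∑ y ∈ univ.filter (fun y : E → ZMod 2 =>
          (Submodule.Quotient.mk y : (E → ZMod 2) ⧸ C) = Submodule.Quotient.mk x), f y) ^ 2 :=
        Finset.sum_fiberwise _ _ _
    _ = ∑ x : E → ZMod 2, f x * (∑ a ∈ CF, f (x + a)) ^ 2 := by
        refine Finset.sum_congr rfl fun x _ => ?_
        rw [cosetSum C x f]
    _ = ∑ x : E → ZMod 2, ∑ a ∈ CF, ∑ b ∈ CF, f (x + a) * f x * f (x + b) := by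
        refine Finset.sum_congr rfl fun x _ => ?_
        rw [sq, Finset.sum_mul_sum, Finset.mul_sum]
        refine Finset.sum_congr rfl fun a _ => ?_
        rw [Finset.mul_sum]
        exact Finset.sum_congr rfl fun b _ => by ring
    _ = ∑ a ∈ CF, ∑ b ∈ CF, ∑ x : E → ZMod 2, f (x + a) * f x * f (x + b) := by
        rw [Finset.sum_comm]
        exact Finset.sum_congr rfl fun a _ => Finset.sum_comm
    _ = ∑ a ∈ CF, ∑ b ∈ CF, (t * (t + 1)) ^ supUnionWt a b *
          (t ^ 3 + 1) ^ (Fintype.card E - supUnionWt a b) := by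
        exact Finset.sum_congr rfl fun a _ => Finset.sum_congr rfl fun b _ => keyPair a b t
end

section
/- Let G be a finite simple graph with edge set E. Then: (i) the number of ordered pairs (A,B) of subsets of E with A△B eulerian and |A| ≡ |B| + 1 (mod 3) equals the number with A△B eulerian and |A| ≡ |B| + 2 (mod 3); and (ii) the number of ordered pairs (A,B) with A△B eulerian and |A| ≡ |B| (mod 3), minus the number with A△B eulerian and |A| ≡ |B| + 1 (mod 3), equals ∑_{A ⊆ E eulerian} (−1)^{|A|} 2^{|E| − |A|}. -/
open Finset

/-- A finite set `A` of potential edges (unordered pairs) is eulerian if every vertex is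
incident with an even number of its elements. -/
def IsEul {V : Type*} (A : Finset (Sym2 V)) : Prop :=
  ∀ v : V, Even (Nat.card {e : Sym2 V // e ∈ A ∧ v ∈ e})

private lemma card_symmDiff_aux {α : Type*} [DecidableEq α] (s t : Finset α) :
    (symmDiff s t).card + (s ∩ t).card + (s ∩ t).card = s.card + t.card := by
  have h1 : (symmDiff s t) = (s \ t) ∪ (t \ s) := symmDiff_def s t
  have hd : Disjoint (s \ t) (t \ s) := disjoint_sdiff_sdiff
  have h2 := Finset.card_sdiff_add_card_inter s t
  have h3 := Finset.card_sdiff_add_card_inter t s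
  rw [h1, Finset.card_union_of_disjoint hd]
  rw [Finset.inter_comm] at h3
  omega

private lemma gkey {α : Type*} [DecidableEq α] (C : Finset α) (k : ZMod 3) :
    3 * (∑ S ∈ C.powerset, if ((S.card : ZMod 3) = k) then (1:ℤ) else 0) =
      2 ^ C.card + (if ((C.card : ZMod 3) + k = 0) then 2 else -1) * (-1) ^ C.card := by
  induction C using Finset.induction_on generalizing k with
  | empty =>
      simp only [Finset.powerset_empty, Finset.sum_singleton, Finset.card_empty]
      by_cases h : k = 0
      · subst h; norm_num
      · simp [h, Ne.symm h]
  | @insert a C ha ih =>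
      rw [Finset.sum_powerset_insert ha]
      have h2 : ∑ S ∈ C.powerset, (if (((insert a S).card : ZMod 3) = k) then (1:ℤ) else 0)
          = ∑ S ∈ C.powerset, (if ((S.card : ZMod 3) = k - 1) then (1:ℤ) else 0) := by
        apply Finset.sum_congr rfl
        intro S hS
        have hx : a ∉ S := fun h => ha (Finset.mem_powerset.mp hS h)
        rw [Finset.card_insert_of_notMem hx]
        apply if_congr _ rfl rfl
        push_cast
        rw [eq_sub_iff_add_eq]
      rw [h2, Finset.card_insert_of_notMem ha]
      have hA := ih k
      have hB := ih (k - 1)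
      have key : (if ((C.card : ZMod 3) + k = 0) then (2:ℤ) else -1)
            + (if ((C.card : ZMod 3) + (k-1) = 0) then 2 else -1)
          = -(if (((C.card + 1 : ℕ) : ZMod 3) + k = 0) then 2 else -1) := by
        push_cast
        have e1 : (C.card : ZMod 3) + (k - 1) = ((C.card : ZMod 3) + k) - 1 := by ring
        have e2 : (C.card : ZMod 3) + 1 + k = ((C.card : ZMod 3) + k) + 1 := by ring
        rw [e1, e2]
        generalize (C.card : ZMod 3) + k = m
        revert m; decide
      linear_combination hA + hB + (-1 : ℤ) ^ C.card * key

private lemma gkey' {α : Type*} [DecidableEq α] (C : Finset α) (k : ZMod 3) :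
    3 * (∑ S ∈ C.powerset, if ((C.card : ZMod 3) + S.card = k) then (1:ℤ) else 0) =
      2 ^ C.card + (if k = 0 then 2 else -1) * (-1) ^ C.card := by
  have e : ∀ S : Finset α, (((C.card : ZMod 3) + S.card = k) ↔ ((S.card : ZMod 3) = k - C.card)) :=
    fun S => by constructor <;> intro h <;> linear_combination h
  simp only [e]
  have h := gkey C (k - C.card)
  have e2 : (C.card : ZMod 3) + (k - C.card) = k := by ring
  rw [e2] at h
  exact h

open Classical in
private lemma main_count {V : Type*} [Fintype V] [DecidableEq V] (G : SimpleGraph V)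
    [DecidableRel G.Adj] (k : ℕ) :
    (Nat.card {p : Finset (Sym2 V) × Finset (Sym2 V) //
        p.1 ⊆ G.edgeFinset ∧ p.2 ⊆ G.edgeFinset ∧ IsEul (symmDiff p.1 p.2) ∧
          p.1.card % 3 = (p.2.card + k) % 3} : ℤ) =
      ∑ C ∈ G.edgeFinset.powerset.filter (fun C => IsEul C),
        2 ^ (G.edgeFinset.card - C.card) *
          (∑ S ∈ C.powerset, if ((C.card : ZMod 3) + S.card = (k : ZMod 3)) then (1:ℤ) else 0) := by
  classical
  set E := G.edgeFinset with hE
  have h30 : (3 : ZMod 3) = 0 := by decide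
  -- Step 1: Nat.card to a sum of indicators over the product of powersets
  rw [Nat.card_eq_fintype_card, Fintype.card_subtype, Finset.card_filter]
  push_cast
  rw [← Finset.sum_subset (Finset.subset_univ (E.powerset ×ˢ E.powerset)) (by
    intro p _ hp
    rw [if_neg]
    intro h
    exact hp (Finset.mem_product.mpr ⟨Finset.mem_powerset.mpr h.1, Finset.mem_powerset.mpr h.2.1⟩))]
  rw [Finset.sum_product, Finset.sum_comm]
  -- Step 2: for fixed B, reindex A ↦ A ∆ B
  have h2 : ∀ B ∈ E.powerset,
      (∑ A ∈ E.powerset, if ((A, B).1 ⊆ E ∧ (A, B).2 ⊆ E ∧ IsEul (symmDiff (A, B).1 (A, B).2) ∧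
          (A, B).1.card % 3 = ((A, B).2.card + k) % 3) then (1:ℤ) else 0)
      = ∑ C ∈ E.powerset, (if IsEul C then
          (if ((C.card : ZMod 3) + ((C ∩ B).card : ZMod 3) = (k : ZMod 3)) then (1:ℤ) else 0) else 0) := by
    intro B hB
    rw [Finset.mem_powerset] at hB
    apply Finset.sum_nbij' (fun A => symmDiff A B) (fun C => symmDiff C B)
    · intro A hA
      rw [Finset.mem_powerset] at hA ⊢
      intro x hx
      rcases Finset.mem_symmDiff.mp hx with ⟨h, _⟩ | ⟨h, _⟩
      · exact hA h
      · exact hB h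
    · intro C hC
      rw [Finset.mem_powerset] at hC ⊢
      intro x hx
      rcases Finset.mem_symmDiff.mp hx with ⟨h, _⟩ | ⟨h, _⟩
      · exact hC h
      · exact hB h
    · intro A _; exact symmDiff_symmDiff_cancel_right B A
    · intro C _; exact symmDiff_symmDiff_cancel_right B C
    · intro A hA
      rw [Finset.mem_powerset] at hA
      simp only
      rw [← ite_and]
      apply if_congr _ rfl rfl
      have hid := card_symmDiff_aux (symmDiff A B) B
      rw [symmDiff_symmDiff_cancel_right B A] at hid
      have hc := congrArg (Nat.cast : ℕ → ZMod 3) hid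
      push_cast at hc
      have hmod : (A.card % 3 = (B.card + k) % 3) ↔
          ((A.card : ZMod 3) = ((B.card + k : ℕ) : ZMod 3)) :=
        (ZMod.natCast_eq_natCast_iff _ _ _).symm
      constructor
      · rintro ⟨-, -, hEul, hcond⟩
        refine ⟨hEul, ?_⟩
        rw [hmod] at hcond
        push_cast at hcond
        linear_combination hcond - hc + ((symmDiff A B ∩ B).card : ZMod 3) * h30
      · rintro ⟨hEul, hcond⟩
        refine ⟨hA, hB, hEul, ?_⟩
        rw [hmod]
        push_cast
        linear_combination hcond + hc - ((symmDiff A B ∩ B).card : ZMod 3) * h30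
  rw [Finset.sum_congr rfl h2, Finset.sum_comm]
  -- Step 3: for fixed eulerian C, split B over C and E \ C
  have h3 : ∀ C ∈ E.powerset,
      (∑ B ∈ E.powerset, if IsEul C then
          (if ((C.card : ZMod 3) + ((C ∩ B).card : ZMod 3) = (k : ZMod 3)) then (1:ℤ) else 0) else 0)
      = if IsEul C then 2 ^ (E.card - C.card) *
          (∑ S ∈ C.powerset, if ((C.card : ZMod 3) + S.card = (k : ZMod 3)) then (1:ℤ) else 0)
        else 0 := by
    intro C hC
    rw [Finset.mem_powerset] at hC
    by_cases h : IsEul C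
    · simp only [if_pos h]
      have e1 : (∑ B ∈ E.powerset,
            if ((C.card : ZMod 3) + ((C ∩ B).card : ZMod 3) = (k : ZMod 3)) then (1:ℤ) else 0)
          = ∑ p ∈ C.powerset ×ˢ (E \ C).powerset,
            (if ((C.card : ZMod 3) + (p.1.card : ZMod 3) = (k : ZMod 3)) then (1:ℤ) else 0) := by
        apply Finset.sum_nbij' (fun B => (B ∩ C, B \ C)) (fun p => p.1 ∪ p.2)
        · intro B hB
          rw [Finset.mem_powerset] at hB
          rw [Finset.mem_product, Finset.mem_powerset, Finset.mem_powerset]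
          exact ⟨Finset.inter_subset_right, Finset.sdiff_subset_sdiff hB (le_refl C)⟩
        · intro p hp
          rw [Finset.mem_product, Finset.mem_powerset, Finset.mem_powerset] at hp
          rw [Finset.mem_powerset]
          exact Finset.union_subset (hp.1.trans hC) (hp.2.trans (Finset.sdiff_subset))
        · intro B _
          ext x
          simp only [Finset.mem_union, Finset.mem_inter, Finset.mem_sdiff]
          tauto
        · intro p hp
          rw [Finset.mem_product, Finset.mem_powerset, Finset.mem_powerset] at hp
          have h1 : ∀ x ∈ p.1, x ∈ C := fun x hx => hp.1 hx
          have h2 : ∀ x ∈ p.2, x ∉ C := fun x hx => (Finset.mem_sdiff.mp (hp.2 hx)).2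
          ext y
          · simp only [Finset.mem_inter, Finset.mem_union]
            constructor
            · rintro ⟨hy | hy, hyC⟩
              · exact hy
              · exact absurd hyC (h2 _ hy)
            · intro hy; exact ⟨Or.inl hy, h1 _ hy⟩
          · simp only [Finset.mem_sdiff, Finset.mem_union]
            constructor
            · rintro ⟨hy | hy, hyC⟩
              · exact absurd (h1 _ hy) hyC
              · exact hy
            · intro hy; exact ⟨Or.inr hy, h2 _ hy⟩
        · intro B _
          simp only
          rw [Finset.inter_comm]
      rw [e1, Finset.sum_product]
      have h4 : ∀ S ∈ C.powerset,
          (∑ _T ∈ (E \ C).powerset,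
            (if ((C.card : ZMod 3) + (S.card : ZMod 3) = (k : ZMod 3)) then (1:ℤ) else 0))
          = 2 ^ (E.card - C.card) *
            (if ((C.card : ZMod 3) + (S.card : ZMod 3) = (k : ZMod 3)) then (1:ℤ) else 0) := by
        intro S _
        rw [Finset.sum_const, Finset.card_powerset, Finset.card_sdiff_of_subset hC, nsmul_eq_mul]
        push_cast
        ring
      rw [Finset.sum_congr rfl h4, ← Finset.mul_sum]
    · simp [h]
  rw [Finset.sum_congr rfl h3]
  exact (Finset.sum_filter _ _).symm

/- (i) the number of ordered pairs `(A,B)` of subsets of `E` with `A △ B` eulerian and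
`|A| ≡ |B| + 1 (mod 3)` equals the number with `A △ B` eulerian and `|A| ≡ |B| + 2 (mod 3)`;
(ii) the number of ordered pairs with `A △ B` eulerian and `|A| ≡ |B| (mod 3)`, minus the
number with `A △ B` eulerian and `|A| ≡ |B| + 1 (mod 3)`, equals
`∑_{A ⊆ E eulerian} (−1)^{|A|} 2^{|E| − |A|}`. -/
open Classical in
theorem stmt_7 {V : Type*} [Fintype V] [DecidableEq V] (G : SimpleGraph V)
    [DecidableRel G.Adj] :
    (Nat.card {p : Finset (Sym2 V) × Finset (Sym2 V) //
        p.1 ⊆ G.edgeFinset ∧ p.2 ⊆ G.edgeFinset ∧ IsEul (symmDiff p.1 p.2) ∧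
          p.1.card % 3 = (p.2.card + 1) % 3} =
      Nat.card {p : Finset (Sym2 V) × Finset (Sym2 V) //
        p.1 ⊆ G.edgeFinset ∧ p.2 ⊆ G.edgeFinset ∧ IsEul (symmDiff p.1 p.2) ∧
          p.1.card % 3 = (p.2.card + 2) % 3}) ∧
    (Nat.card {p : Finset (Sym2 V) × Finset (Sym2 V) //
        p.1 ⊆ G.edgeFinset ∧ p.2 ⊆ G.edgeFinset ∧ IsEul (symmDiff p.1 p.2) ∧
          p.1.card % 3 = p.2.card % 3} : ℤ) -
      (Nat.card {p : Finset (Sym2 V) × Finset (Sym2 V) //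
        p.1 ⊆ G.edgeFinset ∧ p.2 ⊆ G.edgeFinset ∧ IsEul (symmDiff p.1 p.2) ∧
          p.1.card % 3 = (p.2.card + 1) % 3} : ℤ) =
      ∑ A ∈ G.edgeFinset.powerset.filter (fun A => IsEul A),
        (-1 : ℤ) ^ A.card * 2 ^ (G.edgeFinset.card - A.card) := by
  classical
  have h3Z : (3 : ℤ) ≠ 0 := by norm_num
  constructor
  · have h1 := main_count G 1
    have h2 := main_count G 2
    have e : ∀ C : Finset (Sym2 V),
        (∑ S ∈ C.powerset, if ((C.card : ZMod 3) + S.card = ((1:ℕ) : ZMod 3)) then (1:ℤ) else 0)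
        = (∑ S ∈ C.powerset, if ((C.card : ZMod 3) + S.card = ((2:ℕ) : ZMod 3)) then (1:ℤ) else 0) := by
      intro C
      apply mul_left_cancel₀ h3Z
      rw [gkey' C _, gkey' C _,
        if_neg (by decide : ¬ ((1:ℕ) : ZMod 3) = 0), if_neg (by decide : ¬ ((2:ℕ) : ZMod 3) = 0)]
    have := h1.trans ((Finset.sum_congr rfl (fun C _ => by rw [e C])).trans h2.symm)
    exact_mod_cast this
  · have h0 := main_count G 0
    have h1 := main_count G 1
    have hcongr : Nat.card {p : Finset (Sym2 V) × Finset (Sym2 V) //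
          p.1 ⊆ G.edgeFinset ∧ p.2 ⊆ G.edgeFinset ∧ IsEul (symmDiff p.1 p.2) ∧
            p.1.card % 3 = p.2.card % 3}
        = Nat.card {p : Finset (Sym2 V) × Finset (Sym2 V) //
          p.1 ⊆ G.edgeFinset ∧ p.2 ⊆ G.edgeFinset ∧ IsEul (symmDiff p.1 p.2) ∧
            p.1.card % 3 = (p.2.card + 0) % 3} :=
      Nat.card_congr (Equiv.subtypeEquivRight (fun p => by simp))
    rw [hcongr, h0, h1, ← Finset.sum_sub_distrib]
    apply Finset.sum_congr rfl
    intro C _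
    rw [← mul_sub]
    have key : (∑ S ∈ C.powerset, if ((C.card : ZMod 3) + S.card = ((0:ℕ) : ZMod 3)) then (1:ℤ) else 0)
        - (∑ S ∈ C.powerset, if ((C.card : ZMod 3) + S.card = ((1:ℕ) : ZMod 3)) then (1:ℤ) else 0)
        = (-1:ℤ) ^ C.card := by
      apply mul_left_cancel₀ h3Z
      rw [mul_sub, gkey' C _, gkey' C _,
        if_pos (by decide : ((0:ℕ) : ZMod 3) = 0), if_neg (by decide : ¬ ((1:ℕ) : ZMod 3) = 0)]
      ring
    rw [key, mul_comm]
end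

section
/- Let G be a finite simple graph with edge set E. Then: (i) the number of ordered pairs (A,B) of subsets of E with A△B eulerian and |A| + |B| ≡ |E| + 1 (mod 3) equals the number with A△B eulerian and |A| + |B| ≡ |E| + 2 (mod 3); and (ii) the number of ordered pairs (A,B) with A△B eulerian and |A| + |B| ≡ |E| (mod 3), minus the number with A△B eulerian and |A| + |B| ≡ |E| + 1 (mod 3), equals ∑_{A ⊆ E eulerian} (−1)^{|E| − |A|} 2^{|A|}. -/
private lemma pascal3 {α : Type*} [DecidableEq α] {s : Finset α} {a : α} (ha : a ∉ s)
    (j : ℕ) (hj : j < 3) :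
    ((insert a s).powerset.filter (fun t => t.card % 3 = j)).card =
      (s.powerset.filter (fun t => t.card % 3 = j)).card +
      (s.powerset.filter (fun t => t.card % 3 = (j + 2) % 3)).card := by
  rw [Finset.powerset_insert, Finset.filter_union, Finset.card_union_of_disjoint]
  · congr 1
    rw [Finset.filter_image, Finset.card_image_of_injOn]
    · congr 1
      apply Finset.filter_congr
      intro t ht
      simp only [Finset.mem_powerset] at ht
      have hat : a ∉ t := fun h => ha (ht h)
      rw [Finset.card_insert_of_notMem hat]
      constructor <;> intro h <;> omega
    · intro t1 h1 t2 h2 h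
      simp only [Finset.coe_filter, Set.mem_setOf_eq, Finset.mem_powerset] at h1 h2
      have e1 : a ∉ t1 := fun h => ha (h1.1 h)
      have e2 : a ∉ t2 := fun h => ha (h2.1 h)
      rw [← Finset.erase_insert e1, ← Finset.erase_insert e2, h]
  · rw [Finset.disjoint_left]
    intro t h1 h2
    simp only [Finset.mem_filter, Finset.mem_powerset, Finset.mem_image] at h1 h2
    obtain ⟨u, hu, rfl⟩ := h2.1
    exact ha (h1.1 (Finset.mem_insert_self a u))

private lemma cnt_key {α : Type*} [DecidableEq α] (s : Finset α) :
    ((s.powerset.filter (fun t => t.card % 3 = (2 * s.card + 1) % 3)).card =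
      (s.powerset.filter (fun t => t.card % 3 = (2 * s.card + 2) % 3)).card) ∧
    ((s.powerset.filter (fun t => t.card % 3 = (2 * s.card) % 3)).card : ℤ) -
      (s.powerset.filter (fun t => t.card % 3 = (2 * s.card + 2) % 3)).card
      = (-1) ^ s.card := by
  induction s using Finset.induction_on with
  | empty => constructor <;> simp [Finset.filter_singleton]
  | insert _ _ ha =>
    rename_i a s ih
    rw [Finset.card_insert_of_notMem ha]
    set m := s.card with hm
    have h0 : (2 * (m + 1)) % 3 = (2 * m + 2) % 3 := by omega
    have h1 : (2 * (m + 1) + 1) % 3 = (2 * m) % 3 := by omega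
    have h2 : (2 * (m + 1) + 2) % 3 = (2 * m + 1) % 3 := by omega
    rw [h0, h1, h2]
    rw [pascal3 ha ((2*m) % 3) (by omega), pascal3 ha ((2*m+1) % 3) (by omega),
        pascal3 ha ((2*m+2) % 3) (by omega)]
    have e0 : ((2*m) % 3 + 2) % 3 = (2*m+2) % 3 := by omega
    have e1 : ((2*m+1) % 3 + 2) % 3 = (2*m) % 3 := by omega
    have e2 : ((2*m+2) % 3 + 2) % 3 = (2*m+1) % 3 := by omega
    rw [e0, e1, e2]
    obtain ⟨ihA, ihB⟩ := ih
    constructor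
    · omega
    · push_cast
      rw [pow_succ]
      omega

private lemma symm_card {α : Type*} [DecidableEq α] (A C : Finset α) :
    A.card + (symmDiff A C).card = C.card + 2 * (A \ C).card := by
  have h1 := Finset.card_sdiff_add_card_inter A C
  have h2 := Finset.card_sdiff_add_card_inter C A
  have h3 : (symmDiff A C).card = (A \ C).card + (C \ A).card := by
    rw [symmDiff_def, Finset.sup_eq_union,
      Finset.card_union_of_disjoint disjoint_sdiff_sdiff]
  have h4 : (A ∩ C).card = (C ∩ A).card := by rw [Finset.inter_comm]
  omega

private lemma union_split {α : Type*} [DecidableEq α] {E C s t : Finset α}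
    (hs : s ⊆ C) (ht : t ⊆ E \ C) :
    (s ∪ t) ∩ C = s ∧ (s ∪ t) \ C = t := by
  have h1 : ∀ x ∈ s, x ∈ C := fun x hx => hs hx
  have h2 : ∀ x ∈ t, x ∉ C := fun x hx => (Finset.mem_sdiff.mp (ht hx)).2
  refine ⟨?_, ?_⟩ <;> ext x <;>
    simp only [Finset.mem_inter, Finset.mem_union, Finset.mem_sdiff] <;>
    (specialize h1 x; specialize h2 x; tauto)

private lemma count_fixedC {α : Type*} [DecidableEq α] {E C : Finset α} (hC : C ⊆ E) (r : ℕ) :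
    (E.powerset.filter (fun A => (C.card + 2 * (A \ C).card) % 3 = r)).card =
      2 ^ C.card *
        ((E \ C).powerset.filter (fun t => (C.card + 2 * t.card) % 3 = r)).card := by
  classical
  rw [← Finset.card_powerset, ← Finset.card_product]
  apply Finset.card_nbij' (fun A => (A ∩ C, A \ C)) (fun q => q.1 ∪ q.2)
  · intro A hA
    simp only [Finset.mem_coe, Finset.mem_filter, Finset.mem_powerset] at hA
    simp only [Finset.mem_coe, Finset.mem_product, Finset.mem_filter, Finset.mem_powerset]
    exact ⟨Finset.inter_subset_right, ⟨Finset.sdiff_subset_sdiff hA.1 le_rfl, hA.2⟩⟩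
  · intro q hq
    simp only [Finset.mem_coe, Finset.mem_product, Finset.mem_filter, Finset.mem_powerset] at hq
    obtain ⟨h1, h2, h3⟩ := hq
    have := union_split h1 h2
    simp only [Finset.mem_coe, Finset.mem_filter, Finset.mem_powerset]
    exact ⟨Finset.union_subset (h1.trans hC) (h2.trans Finset.sdiff_subset),
      by rw [this.2]; exact h3⟩
  · intro A hA
    dsimp only
    rw [Finset.union_comm]
    exact Finset.sdiff_union_inter A C
  · intro q hq
    simp only [Finset.mem_coe, Finset.mem_product, Finset.mem_filter, Finset.mem_powerset] at hq
    have := union_split hq.1 hq.2.1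
    dsimp only
    rw [this.1, this.2]

private lemma chain {α : Type*} [DecidableEq α] (E : Finset α) (P : Finset α → Prop)
    [DecidablePred P] (r : ℕ) :
    ((E.powerset ×ˢ E.powerset).filter
        (fun p => P (symmDiff p.1 p.2) ∧ (p.1.card + p.2.card) % 3 = r)).card =
      ∑ C ∈ E.powerset.filter P,
        (E.powerset.filter (fun A => (C.card + 2 * (A \ C).card) % 3 = r)).card := by
  classical
  have hsub : ∀ {A B : Finset α}, A ⊆ E → B ⊆ E → symmDiff A B ⊆ E := by
    intro A B hA hB
    exact le_trans symmDiff_le_sup (sup_le hA hB)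
  have step1 : ((E.powerset ×ˢ E.powerset).filter
        (fun p => P (symmDiff p.1 p.2) ∧ (p.1.card + p.2.card) % 3 = r)).card =
      ((E.powerset ×ˢ E.powerset).filter
        (fun q => P q.1 ∧ (q.1.card + 2 * (q.2 \ q.1).card) % 3 = r)).card := by
    apply Finset.card_nbij' (fun p => (symmDiff p.1 p.2, p.1))
      (fun q => (q.2, symmDiff q.2 q.1))
    · intro p hp
      simp only [Finset.mem_coe, Finset.mem_filter, Finset.mem_product, Finset.mem_powerset] at hp ⊢
      obtain ⟨⟨hA, hB⟩, hP, hr⟩ := hp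
      refine ⟨⟨hsub hA hB, hA⟩, hP, ?_⟩
      have hBe : symmDiff p.1 (symmDiff p.1 p.2) = p.2 :=
        symmDiff_symmDiff_cancel_left p.1 p.2
      have h5 := symm_card p.1 (symmDiff p.1 p.2)
      rw [hBe] at h5
      omega
    · intro q hq
      simp only [Finset.mem_coe, Finset.mem_filter, Finset.mem_product, Finset.mem_powerset] at hq ⊢
      obtain ⟨⟨hC, hA⟩, hP, hr⟩ := hq
      refine ⟨⟨hA, hsub hA hC⟩, ?_, ?_⟩
      · rwa [symmDiff_symmDiff_cancel_left]
      · have := symm_card q.2 q.1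
        omega
    · intro p hp
      simp only [symmDiff_symmDiff_cancel_left]
    · intro q hq
      simp only [symmDiff_symmDiff_cancel_left]
  rw [step1]
  rw [Finset.card_eq_sum_card_fiberwise
    (f := Prod.fst) (t := E.powerset.filter P) ?_]
  · apply Finset.sum_congr rfl
    intro C hC
    apply Finset.card_nbij' (fun q => q.2) (fun A => (C, A))
    · intro q hq
      simp only [Finset.mem_coe, Finset.mem_filter, Finset.mem_product, Finset.mem_powerset] at hq ⊢
      obtain ⟨⟨⟨_, hA⟩, _, hr⟩, hfst⟩ := hq
      exact ⟨hA, by rw [← hfst]; exact hr⟩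
    · intro A hA
      simp only [Finset.mem_coe, Finset.mem_filter, Finset.mem_powerset] at hA hC
      refine Finset.mem_filter.mpr ⟨Finset.mem_filter.mpr ⟨?_, hC.2, hA.2⟩, rfl⟩
      exact Finset.mk_mem_product (Finset.mem_powerset.mpr hC.1) (Finset.mem_powerset.mpr hA.1)
    · intro q hq
      simp only [Finset.mem_coe, Finset.mem_filter] at hq
      rw [← hq.2]
    · intro A _
      rfl
  · intro q hq
    simp only [Finset.mem_coe, Finset.mem_filter, Finset.mem_product, Finset.mem_powerset] at hq ⊢
    exact ⟨hq.1.1, hq.2.1⟩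

/- (i) the number of ordered pairs `(A,B)` of subsets of `E` with `A △ B` eulerian and
`|A| + |B| ≡ |E| + 1 (mod 3)` equals the number with `|A| + |B| ≡ |E| + 2 (mod 3)`;
(ii) the count with `|A| + |B| ≡ |E| (mod 3)` minus the count with
`|A| + |B| ≡ |E| + 1 (mod 3)` equals `∑_{A ⊆ E eulerian} (−1)^{|E| − |A|} 2^{|A|}`. -/
open Classical in
theorem stmt_8 {V : Type*} [Fintype V] [DecidableEq V] (G : SimpleGraph V)
    [DecidableRel G.Adj] :
    (Nat.card {p : Finset (Sym2 V) × Finset (Sym2 V) //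
        p.1 ⊆ G.edgeFinset ∧ p.2 ⊆ G.edgeFinset ∧ IsEul (symmDiff p.1 p.2) ∧
          (p.1.card + p.2.card) % 3 = (G.edgeFinset.card + 1) % 3} =
      Nat.card {p : Finset (Sym2 V) × Finset (Sym2 V) //
        p.1 ⊆ G.edgeFinset ∧ p.2 ⊆ G.edgeFinset ∧ IsEul (symmDiff p.1 p.2) ∧
          (p.1.card + p.2.card) % 3 = (G.edgeFinset.card + 2) % 3}) ∧
    (Nat.card {p : Finset (Sym2 V) × Finset (Sym2 V) //
        p.1 ⊆ G.edgeFinset ∧ p.2 ⊆ G.edgeFinset ∧ IsEul (symmDiff p.1 p.2) ∧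
          (p.1.card + p.2.card) % 3 = G.edgeFinset.card % 3} : ℤ) -
      (Nat.card {p : Finset (Sym2 V) × Finset (Sym2 V) //
        p.1 ⊆ G.edgeFinset ∧ p.2 ⊆ G.edgeFinset ∧ IsEul (symmDiff p.1 p.2) ∧
          (p.1.card + p.2.card) % 3 = (G.edgeFinset.card + 1) % 3} : ℤ) =
      ∑ A ∈ G.edgeFinset.powerset.filter (fun A => IsEul A),
        (-1 : ℤ) ^ (G.edgeFinset.card - A.card) * 2 ^ A.card := by
  classical
  set E := G.edgeFinset with hE
  set n := E.card with hn
  have key : ∀ i : ℕ,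
      (Nat.card {p : Finset (Sym2 V) × Finset (Sym2 V) //
        p.1 ⊆ E ∧ p.2 ⊆ E ∧ IsEul (symmDiff p.1 p.2) ∧
          (p.1.card + p.2.card) % 3 = (n + i) % 3} : ℕ) =
      ∑ C ∈ E.powerset.filter (fun A => IsEul A),
        2 ^ C.card * (((E \ C).powerset.filter
          (fun t => t.card % 3 = (2 * (E \ C).card + 2 * i) % 3)).card) := by
    intro i
    rw [Nat.card_eq_fintype_card, Fintype.card_subtype]
    have huniv : (Finset.univ.filter (fun p : Finset (Sym2 V) × Finset (Sym2 V) =>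
          p.1 ⊆ E ∧ p.2 ⊆ E ∧ IsEul (symmDiff p.1 p.2) ∧
            (p.1.card + p.2.card) % 3 = (n + i) % 3)) =
        (E.powerset ×ˢ E.powerset).filter (fun p =>
          IsEul (symmDiff p.1 p.2) ∧ (p.1.card + p.2.card) % 3 = (n + i) % 3) := by
      ext p
      simp only [Finset.mem_filter, Finset.mem_univ, true_and, Finset.mem_product,
        Finset.mem_powerset]
      tauto
    rw [huniv, chain E IsEul ((n + i) % 3)]
    apply Finset.sum_congr rfl
    intro C hC
    simp only [Finset.mem_filter, Finset.mem_powerset] at hC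
    rw [count_fixedC hC.1]
    congr 1
    apply congrArg Finset.card
    apply Finset.filter_congr
    intro t _
    have hm : (E \ C).card + C.card = n := by
      rw [Finset.card_sdiff_add_card_eq_card hC.1]
    constructor <;> intro h <;> omega
  constructor
  · rw [key 1, key 2]
    apply Finset.sum_congr rfl
    intro C _
    have h1 : (2 * (E \ C).card + 2 * 1) % 3 = (2 * (E \ C).card + 2) % 3 := by omega
    have h2 : (2 * (E \ C).card + 2 * 2) % 3 = (2 * (E \ C).card + 1) % 3 := by omega
    rw [h1, h2, (cnt_key (E \ C)).1]
  · have k0 := key 0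
    simp only [Nat.add_zero, Nat.mul_zero] at k0
    rw [k0, key 1]
    push_cast
    rw [← Finset.sum_sub_distrib]
    apply Finset.sum_congr rfl
    intro C hC
    simp only [Finset.mem_filter, Finset.mem_powerset] at hC
    have h1 : (2 * (E \ C).card + 2 * 1) % 3 = (2 * (E \ C).card + 2) % 3 := by omega
    rw [h1, ← mul_sub, (cnt_key (E \ C)).2, Finset.card_sdiff_of_subset hC.1]
    ring
end

section
/- Let G be a finite simple graph with edge set E. Then: (i) the number of ordered triples (A,B,C) of subsets of E with A△B and B△C both eulerian and |A| + |B| + |C| ≡ 1 (mod 3) equals the number of such triples with |A| + |B| + |C| ≡ 2 (mod 3); and (ii) the number of such triples with |A| + |B| + |C| ≡ 0 (mod 3), minus the number with |A| + |B| + |C| ≡ 1 (mod 3), equals ∑_{(a,b)} (−1)^{|a ∪ b|} 2^{|E| − |a ∪ b|}, the sum being over ordered pairs (a,b) of eulerian subsets of E. -/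
open Finset

/-- auxiliary -/
lemma omega_exists : ∃ ω : ℂ, ω ^ 2 + ω + 1 = 0 := by
  use (-1 + Real.sqrt 3 * Complex.I) / 2
  have h3 : ((Real.sqrt 3 : ℝ) : ℂ) ^ 2 = 3 := by
    norm_cast; rw [Real.sq_sqrt]; norm_num
  have h : ((Real.sqrt 3 : ℝ) : ℂ) ^ 2 * Complex.I ^ 2 = -3 := by
    rw [h3, Complex.I_sq]; ring
  field_simp
  linear_combination h

open Classical in
lemma eul_inner_sum {α : Type*} [DecidableEq α] (ω : ℂ) (hω : ω ^ 2 + ω + 1 = 0)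
    (E a b : Finset α) (ha : a ⊆ E) (hb : b ⊆ E) :
    ∑ B ∈ E.powerset,
      ω ^ ((symmDiff a B).card + B.card + (symmDiff b B).card) =
      (-1 : ℂ) ^ (a ∪ b).card * 2 ^ (E.card - (a ∪ b).card) := by
  have hω3 : ω ^ 3 = 1 := by linear_combination (ω - 1) * hω
  set f : α → ℂ := fun x => ω ^ ((if x ∈ a then 0 else 1) + 1 + (if x ∈ b then 0 else 1)) with hf
  set g : α → ℂ := fun x => ω ^ ((if x ∈ a then 1 else 0) + (if x ∈ b then 1 else 0)) with hg
  have key : ∀ B ∈ E.powerset,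
      ω ^ ((symmDiff a B).card + B.card + (symmDiff b B).card)
        = (∏ x ∈ B, f x) * ∏ x ∈ E \ B, g x := by
    intro B hB
    rw [mem_powerset] at hB
    have hcard : ∀ s : Finset α, s ⊆ E → s.card = ∑ x ∈ E, (if x ∈ s then 1 else 0) := by
      intro s hs
      rw [Finset.sum_ite_mem, inter_eq_right.2 hs, ← Finset.card_eq_sum_ones]
    have hab : symmDiff a B ⊆ E := le_trans symmDiff_le_sup (union_subset ha hB)
    have hbb : symmDiff b B ⊆ E := le_trans symmDiff_le_sup (union_subset hb hB)
    rw [hcard _ hab, hcard _ hB, hcard _ hbb, ← Finset.sum_add_distrib, ← Finset.sum_add_distrib,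
      ← Finset.prod_pow_eq_pow_sum, ← Finset.prod_sdiff hB, mul_comm]
    congr 1
    · apply Finset.prod_congr rfl
      intro x hx
      simp only [hf, Finset.mem_symmDiff]
      by_cases hxa : x ∈ a <;> by_cases hxb : x ∈ b <;> simp [hxa, hxb, hx]
    · apply Finset.prod_congr rfl
      intro x hx
      rw [mem_sdiff] at hx
      simp only [hg, Finset.mem_symmDiff]
      by_cases hxa : x ∈ a <;> by_cases hxb : x ∈ b <;> simp [hxa, hxb, hx.2]
  rw [Finset.sum_congr rfl key, ← Finset.prod_add f g E]
  have hfactor : ∀ x ∈ E, f x + g x = (if x ∈ a ∪ b then (-1 : ℂ) else 2) := by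
    intro x _
    by_cases hxa : x ∈ a <;> by_cases hxb : x ∈ b <;>
      simp only [hf, hg, hxa, hxb, if_true, if_false, mem_union] <;> norm_num
    · linear_combination hω
    · linear_combination hω
    · linear_combination hω
    · linear_combination hω3
  rw [Finset.prod_congr rfl hfactor, Finset.prod_ite (fun _ => (-1 : ℂ)) (fun _ => (2 : ℂ)),
    Finset.prod_const, Finset.prod_const, Finset.filter_mem_eq_inter,
    inter_eq_right.2 (union_subset ha hb)]
  congr 1
  have : Finset.filter (fun x => ¬ x ∈ a ∪ b) E = E \ (a ∪ b) := by
    ext x; simp [mem_sdiff, and_comm]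
  rw [this, card_sdiff_of_subset (union_subset ha hb)]



/- (i) the number of ordered triples `(A,B,C)` of subsets of `E` with `A △ B`, `B △ C`
both eulerian and `|A|+|B|+|C| ≡ 1 (mod 3)` equals the number with `≡ 2 (mod 3)`;
(ii) the count with `≡ 0 (mod 3)` minus the count with `≡ 1 (mod 3)` equals
`∑_{(a,b) eulerian} (−1)^{|a ∪ b|} 2^{|E| − |a ∪ b|}`. -/
set_option maxHeartbeats 1000000 in
open Classical in
theorem stmt_9 {V : Type*} [Fintype V] [DecidableEq V] (G : SimpleGraph V)
    [DecidableRel G.Adj] :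
    (Nat.card {p : Finset (Sym2 V) × Finset (Sym2 V) × Finset (Sym2 V) //
        p.1 ⊆ G.edgeFinset ∧ p.2.1 ⊆ G.edgeFinset ∧ p.2.2 ⊆ G.edgeFinset ∧
          IsEul (symmDiff p.1 p.2.1) ∧ IsEul (symmDiff p.2.1 p.2.2) ∧
          (p.1.card + p.2.1.card + p.2.2.card) % 3 = 1} =
      Nat.card {p : Finset (Sym2 V) × Finset (Sym2 V) × Finset (Sym2 V) //
        p.1 ⊆ G.edgeFinset ∧ p.2.1 ⊆ G.edgeFinset ∧ p.2.2 ⊆ G.edgeFinset ∧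
          IsEul (symmDiff p.1 p.2.1) ∧ IsEul (symmDiff p.2.1 p.2.2) ∧
          (p.1.card + p.2.1.card + p.2.2.card) % 3 = 2}) ∧
    (Nat.card {p : Finset (Sym2 V) × Finset (Sym2 V) × Finset (Sym2 V) //
        p.1 ⊆ G.edgeFinset ∧ p.2.1 ⊆ G.edgeFinset ∧ p.2.2 ⊆ G.edgeFinset ∧
          IsEul (symmDiff p.1 p.2.1) ∧ IsEul (symmDiff p.2.1 p.2.2) ∧
          (p.1.card + p.2.1.card + p.2.2.card) % 3 = 0} : ℤ) -
      (Nat.card {p : Finset (Sym2 V) × Finset (Sym2 V) × Finset (Sym2 V) //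
        p.1 ⊆ G.edgeFinset ∧ p.2.1 ⊆ G.edgeFinset ∧ p.2.2 ⊆ G.edgeFinset ∧
          IsEul (symmDiff p.1 p.2.1) ∧ IsEul (symmDiff p.2.1 p.2.2) ∧
          (p.1.card + p.2.1.card + p.2.2.card) % 3 = 1} : ℤ) =
      ∑ a ∈ G.edgeFinset.powerset.filter (fun a => IsEul a),
        ∑ b ∈ G.edgeFinset.powerset.filter (fun b => IsEul b),
          (-1 : ℤ) ^ (a ∪ b).card * 2 ^ (G.edgeFinset.card - (a ∪ b).card) := by
    classical
  set E : Finset (Sym2 V) := G.edgeFinset with hEdef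
  -- the base predicate and the counting function
  set base : Finset (Sym2 V) × Finset (Sym2 V) × Finset (Sym2 V) → Prop := fun p =>
    p.1 ⊆ E ∧ p.2.1 ⊆ E ∧ p.2.2 ⊆ E ∧
      IsEul (symmDiff p.1 p.2.1) ∧ IsEul (symmDiff p.2.1 p.2.2) with hbase
  set ec : Finset (Sym2 V) × Finset (Sym2 V) × Finset (Sym2 V) → ℕ := fun p =>
    p.1.card + p.2.1.card + p.2.2.card with hec
  set P : Finset (Finset (Sym2 V) × Finset (Sym2 V) × Finset (Sym2 V)) :=
    Finset.univ.filter base with hP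
  set Pj : ℕ → Finset (Finset (Sym2 V) × Finset (Sym2 V) × Finset (Sym2 V)) :=
    fun j => Finset.univ.filter (fun p => base p ∧ ec p % 3 = j) with hPj
  have hcard : ∀ j : ℕ, Nat.card {p : Finset (Sym2 V) × Finset (Sym2 V) × Finset (Sym2 V) //
      p.1 ⊆ E ∧ p.2.1 ⊆ E ∧ p.2.2 ⊆ E ∧
        IsEul (symmDiff p.1 p.2.1) ∧ IsEul (symmDiff p.2.1 p.2.2) ∧
        (p.1.card + p.2.1.card + p.2.2.card) % 3 = j} = (Pj j).card := by
    intro j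
    rw [Nat.card_eq_fintype_card, Fintype.card_subtype, hPj]
    congr 1
    apply Finset.filter_congr
    intro p _
    simp only [hbase, hec]
    tauto
  -- the complement map shows |Pj 1| = |Pj 2|
  have hcompl : ∀ A B : Finset (Sym2 V), A ⊆ E → B ⊆ E →
      symmDiff (E \ A) (E \ B) = symmDiff A B := by
    intro A B hA hB
    ext x
    have h1 : x ∈ A → x ∈ E := fun h => hA h
    have h2 : x ∈ B → x ∈ E := fun h => hB h
    simp only [Finset.mem_symmDiff, Finset.mem_sdiff]
    tauto
  have part1 : (Pj 1).card = (Pj 2).card := by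
    apply Finset.card_bij' (i := fun p _ => (E \ p.1, E \ p.2.1, E \ p.2.2))
      (j := fun p _ => (E \ p.1, E \ p.2.1, E \ p.2.2))
    · intro p hp
      simp only [hPj, Finset.mem_filter, Finset.mem_univ, true_and, hbase, hec] at hp ⊢
      obtain ⟨⟨h1, h2, h3, h4, h5⟩, h6⟩ := hp
      refine ⟨⟨sdiff_subset, sdiff_subset, sdiff_subset, ?_, ?_⟩, ?_⟩
      · rwa [hcompl _ _ h1 h2]
      · rwa [hcompl _ _ h2 h3]
      · rw [card_sdiff_of_subset h1, card_sdiff_of_subset h2, card_sdiff_of_subset h3]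
        have c1 := Finset.card_le_card h1
        have c2 := Finset.card_le_card h2
        have c3 := Finset.card_le_card h3
        omega
    · intro p hp
      simp only [hPj, Finset.mem_filter, Finset.mem_univ, true_and, hbase, hec] at hp ⊢
      obtain ⟨⟨h1, h2, h3, h4, h5⟩, h6⟩ := hp
      refine ⟨⟨sdiff_subset, sdiff_subset, sdiff_subset, ?_, ?_⟩, ?_⟩
      · rwa [hcompl _ _ h1 h2]
      · rwa [hcompl _ _ h2 h3]
      · rw [card_sdiff_of_subset h1, card_sdiff_of_subset h2, card_sdiff_of_subset h3]
        have c1 := Finset.card_le_card h1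
        have c2 := Finset.card_le_card h2
        have c3 := Finset.card_le_card h3
        omega
    · intro p hp
      simp only [hPj, Finset.mem_filter, Finset.mem_univ, true_and, hbase] at hp
      obtain ⟨⟨h1, h2, h3, _, _⟩, _⟩ := hp
      ext1
      · exact Finset.sdiff_sdiff_eq_self h1
      ext1
      · exact Finset.sdiff_sdiff_eq_self h2
      · exact Finset.sdiff_sdiff_eq_self h3
    · intro p hp
      simp only [hPj, Finset.mem_filter, Finset.mem_univ, true_and, hbase] at hp
      obtain ⟨⟨h1, h2, h3, _, _⟩, _⟩ := hp
      ext1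
      · exact Finset.sdiff_sdiff_eq_self h1
      ext1
      · exact Finset.sdiff_sdiff_eq_self h2
      · exact Finset.sdiff_sdiff_eq_self h3
  refine ⟨by rw [hcard 1, hcard 2, part1], ?_⟩
  -- part (ii)
  obtain ⟨ω, hω⟩ := omega_exists
  have hω3 : ω ^ 3 = 1 := by linear_combination (ω - 1) * hω
  set eulF : Finset (Finset (Sym2 V)) := E.powerset.filter (fun a => IsEul a) with heulF
  set S : ℂ := ∑ p ∈ P, ω ^ ec p with hS
  -- S split by residues
  have hfib : ∑ j ∈ Finset.range 3, ∑ p ∈ P.filter (fun p => ec p % 3 = j), ω ^ ec p = S :=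
    Finset.sum_fiberwise_of_maps_to (fun p _ => Finset.mem_range.2 (Nat.mod_lt _ (by norm_num))) _
  have hPfil : ∀ j, P.filter (fun p => ec p % 3 = j) = Pj j := by
    intro j
    rw [hP, hPj, Finset.filter_filter]
  have hconst : ∀ j, ∑ p ∈ Pj j, ω ^ ec p = ((Pj j).card : ℂ) * ω ^ j := by
    intro j
    rw [Finset.sum_congr rfl (g := fun _ => ω ^ j) (fun p hp => ?_), Finset.sum_const,
      nsmul_eq_mul]
    have hp' : ec p % 3 = j := by
      simp only [hPj, Finset.mem_filter] at hp
      exact hp.2.2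
    have hd : ec p = 3 * (ec p / 3) + j := by omega
    rw [hd, pow_add, pow_mul, hω3, one_pow, one_mul]
  have h1 : S = ((Pj 0).card : ℂ) * ω ^ 0 + ((Pj 1).card : ℂ) * ω ^ 1
      + ((Pj 2).card : ℂ) * ω ^ 2 := by
    rw [← hfib]
    rw [Finset.sum_range_succ, Finset.sum_range_succ, Finset.sum_range_one,
      hPfil 0, hPfil 1, hPfil 2, hconst 0, hconst 1, hconst 2]
  -- S via reindexing
  have h2 : S = ∑ a ∈ eulF, ∑ b ∈ eulF,
      (-1 : ℂ) ^ (a ∪ b).card * 2 ^ (E.card - (a ∪ b).card) := by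
    have hre : S = ∑ q ∈ eulF ×ˢ (eulF ×ˢ E.powerset),
        ω ^ ((symmDiff q.1 q.2.2).card + q.2.2.card + (symmDiff q.2.1 q.2.2).card) := by
      rw [hS]
      refine Finset.sum_bij'
        (fun p _ => (symmDiff p.1 p.2.1, symmDiff p.2.1 p.2.2, p.2.1))
        (fun q _ => (symmDiff q.1 q.2.2, q.2.2, symmDiff q.2.1 q.2.2))
        ?_ ?_ ?_ ?_ ?_
      · intro p hp
        simp only [hP, Finset.mem_filter, Finset.mem_univ, true_and, hbase] at hp
        obtain ⟨h1', h2', h3', h4', h5'⟩ := hp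
        simp only [Finset.mem_product, heulF, Finset.mem_filter, Finset.mem_powerset]
        exact ⟨⟨le_trans symmDiff_le_sup (union_subset h1' h2'), h4'⟩,
          ⟨le_trans symmDiff_le_sup (union_subset h2' h3'), h5'⟩, h2'⟩
      · intro q hq
        simp only [Finset.mem_product, heulF, Finset.mem_filter, Finset.mem_powerset] at hq
        obtain ⟨⟨ha', hea⟩, ⟨hb', heb⟩, hB⟩ := hq
        simp only [hP, Finset.mem_filter, Finset.mem_univ, true_and, hbase]
        refine ⟨le_trans symmDiff_le_sup (union_subset ha' hB), hB,
          le_trans symmDiff_le_sup (union_subset hb' hB), ?_, ?_⟩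
        · rwa [symmDiff_symmDiff_cancel_right]
        · rwa [symmDiff_comm q.2.1 q.2.2, symmDiff_symmDiff_cancel_left]
      · intro p hp
        have e2 : symmDiff (symmDiff p.2.1 p.2.2) p.2.1 = p.2.2 := by
          rw [symmDiff_comm p.2.1 p.2.2]; exact symmDiff_symmDiff_cancel_right _ _
        exact Prod.ext (symmDiff_symmDiff_cancel_right _ _) (Prod.ext rfl e2)
      · intro q hq
        have e2 : symmDiff q.2.2 (symmDiff q.2.1 q.2.2) = q.2.1 := by
          rw [symmDiff_comm q.2.1 q.2.2]; exact symmDiff_symmDiff_cancel_left _ _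
        exact Prod.ext (symmDiff_symmDiff_cancel_right _ _) (Prod.ext e2 rfl)
      · intro p hp
        simp only [hec]
        rw [symmDiff_symmDiff_cancel_right, symmDiff_comm p.2.1 p.2.2,
          symmDiff_symmDiff_cancel_right]
    rw [hre, Finset.sum_product]
    apply Finset.sum_congr rfl
    intro a ha
    rw [Finset.sum_product]
    apply Finset.sum_congr rfl
    intro b hb
    simp only [heulF, Finset.mem_filter, Finset.mem_powerset] at ha hb
    exact eul_inner_sum ω hω E a b ha.1 hb.1
  -- combine
  rw [hcard 0, hcard 1]
  have hC : (((Pj 0).card : ℤ) : ℂ) - (((Pj 1).card : ℤ) : ℂ) =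
      ((∑ a ∈ eulF, ∑ b ∈ eulF,
        (-1 : ℤ) ^ (a ∪ b).card * 2 ^ (E.card - (a ∪ b).card) : ℤ) : ℂ) := by
    push_cast
    rw [part1] at h1
    have hp12 : (((Pj 1).card : ℕ) : ℂ) = (((Pj 2).card : ℕ) : ℂ) := by exact_mod_cast part1
    linear_combination h2 - h1 - ((Pj 1).card : ℂ) * hω + (ω + ω ^ 2) * hp12
  exact_mod_cast hC
end

section
/- Let G be a finite simple graph with edge set E. Then the number of ordered pairs (A,B) of subsets of E with A△B eulerian and |A| − |B| ≡ 0 or 1 (mod 4), minus the number of ordered pairs with A△B eulerian and |A| − |B| ≡ 2 or 3 (mod 4), equals 2^{|E|}. -/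
open scoped symmDiff


section Aux

variable {α : Type*} [DecidableEq α]

/-- Pick an element from a nonempty finset. -/
noncomputable def pk (C : Finset α) (h : C.Nonempty) : α := h.choose

lemma pk_mem (C : Finset α) (h : C.Nonempty) : pk C h ∈ C := h.choose_spec

lemma pk_congr {C₁ C₂ : Finset α} (h : C₁ = C₂) (h₁ : C₁.Nonempty) (h₂ : C₂.Nonempty) :
    pk C₁ h₁ = pk C₂ h₂ := by subst h; rfl

lemma symmDiff_symmDiff_singleton (A B : Finset α) (e : α) :
    (symmDiff A {e}) ∆ (symmDiff B {e}) = A ∆ B := by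
  rw [symmDiff_symmDiff_symmDiff_comm, symmDiff_self, symmDiff_bot]

lemma symmDiff_singleton_subset {A m : Finset α} {e : α} (hA : A ⊆ m) (he : e ∈ m) :
    symmDiff A {e} ⊆ m := by
  intro x hx
  rcases Finset.mem_symmDiff.mp hx with ⟨h, _⟩ | ⟨h, _⟩
  · exact hA h
  · exact Finset.mem_singleton.mp h ▸ he

lemma step_card {A B : Finset α} {e : α} (he : e ∈ A ∆ B) :
    (((symmDiff A {e}).card : ℤ) - ((symmDiff B {e}).card : ℤ)
      = (A.card : ℤ) - B.card + 2) ∨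
    (((symmDiff A {e}).card : ℤ) - ((symmDiff B {e}).card : ℤ)
      = (A.card : ℤ) - B.card - 2) := by
  have key : ∀ C : Finset α, symmDiff C {e} = if e ∈ C then C.erase e else insert e C := by
    intro C
    split_ifs with h <;> ext x <;> simp [Finset.mem_symmDiff] <;> by_cases hx : x = e <;>
      simp [hx, h] <;> tauto
  rcases Finset.mem_symmDiff.mp he with ⟨h1, h2⟩ | ⟨h2, h1⟩
  · right
    rw [key A, key B, if_pos h1, if_neg h2, Finset.cast_card_erase_of_mem h1,
      Finset.card_insert_of_notMem h2]
    push_cast; ring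
  · left
    rw [key A, key B, if_neg h1, if_pos h2, Finset.cast_card_erase_of_mem h2,
      Finset.card_insert_of_notMem h1]
    push_cast; ring

lemma natcard_subtype {β : Type*} [Fintype β] (P : β → Prop) [DecidablePred P] :
    Nat.card {x // P x} = (Finset.univ.filter P).card := by
  rw [Nat.card_eq_fintype_card, Fintype.card_subtype]

end Aux

lemma isEul_empty {V : Type*} : IsEul (∅ : Finset (Sym2 V)) := by
  intro v
  have : IsEmpty {e : Sym2 V // e ∈ (∅ : Finset (Sym2 V)) ∧ v ∈ e} :=
    ⟨fun x => absurd x.2.1 (by simp)⟩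
  simp [Nat.card_of_isEmpty]

/-- The number of ordered pairs `(A,B)` of subsets of `E` with `A △ B` eulerian and
`|A| − |B| ≡ 0` or `1 (mod 4)`, minus the number with `A △ B` eulerian and
`|A| − |B| ≡ 2` or `3 (mod 4)`, equals `2^{|E|}`. -/
theorem stmt_10 {V : Type*} [Fintype V] [DecidableEq V] (G : SimpleGraph V)
    [DecidableRel G.Adj] :
    (Nat.card {p : Finset (Sym2 V) × Finset (Sym2 V) //
        p.1 ⊆ G.edgeFinset ∧ p.2 ⊆ G.edgeFinset ∧ IsEul (symmDiff p.1 p.2) ∧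
          (((p.1.card : ℤ) - (p.2.card : ℤ)) % 4 = 0 ∨
            ((p.1.card : ℤ) - (p.2.card : ℤ)) % 4 = 1)} : ℤ) -
      (Nat.card {p : Finset (Sym2 V) × Finset (Sym2 V) //
        p.1 ⊆ G.edgeFinset ∧ p.2 ⊆ G.edgeFinset ∧ IsEul (symmDiff p.1 p.2) ∧
          (((p.1.card : ℤ) - (p.2.card : ℤ)) % 4 = 2 ∨
            ((p.1.card : ℤ) - (p.2.card : ℤ)) % 4 = 3)} : ℤ) =
    2 ^ G.edgeFinset.card := by
  classical
  set m := G.edgeFinset with hm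
  set P1 : Finset (Sym2 V) × Finset (Sym2 V) → Prop := fun p =>
    p.1 ⊆ m ∧ p.2 ⊆ m ∧ IsEul (symmDiff p.1 p.2) ∧
      (((p.1.card : ℤ) - (p.2.card : ℤ)) % 4 = 0 ∨
        ((p.1.card : ℤ) - (p.2.card : ℤ)) % 4 = 1) with hP1
  set P2 : Finset (Sym2 V) × Finset (Sym2 V) → Prop := fun p =>
    p.1 ⊆ m ∧ p.2 ⊆ m ∧ IsEul (symmDiff p.1 p.2) ∧
      (((p.1.card : ℤ) - (p.2.card : ℤ)) % 4 = 2 ∨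
        ((p.1.card : ℤ) - (p.2.card : ℤ)) % 4 = 3) with hP2
  rw [natcard_subtype P1, natcard_subtype P2]
  set s1 := Finset.univ.filter P1 with hs1
  set s2 := Finset.univ.filter P2 with hs2
  -- key: e ∈ A ∆ B implies e ∈ m
  have hmem_m : ∀ {A B : Finset (Sym2 V)}, A ⊆ m → B ⊆ m → ∀ {e}, e ∈ A ∆ B → e ∈ m := by
    intro A B hA hB e he
    rcases Finset.mem_symmDiff.mp he with ⟨h, _⟩ | ⟨h, _⟩
    exacts [hA h, hB h]
  suffices h : s1.card = s2.card + 2 ^ m.card by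
    rw [h]; push_cast; ring
  -- split s1 into diagonal and off-diagonal parts
  have hsplit : (s1.filter fun p => p.1 = p.2).card
      + (s1.filter fun p => ¬ p.1 = p.2).card = s1.card :=
    Finset.card_filter_add_card_filter_not _
  -- diagonal part has 2^|m| elements
  have hdiag : (s1.filter fun p => p.1 = p.2).card = 2 ^ m.card := by
    rw [← Finset.card_powerset]
    refine Finset.card_bij' (fun p _ => p.1) (fun A _ => (A, A)) ?_ ?_ ?_ ?_
    · intro p hp
      simp only [hs1, Finset.mem_filter, Finset.mem_univ, true_and, hP1] at hp
      exact Finset.mem_powerset.mpr hp.1.1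
    · intro A hA
      simp only [hs1, Finset.mem_filter, Finset.mem_univ, true_and, hP1,
        Finset.mem_powerset] at hA ⊢
      exact ⟨⟨hA, hA, by rw [symmDiff_self]; exact isEul_empty, by left; simp⟩, trivial⟩
    · intro p hp
      simp only [hs1, Finset.mem_filter] at hp
      exact Prod.ext rfl hp.2
    · intro A _
      rfl
  -- off-diagonal part is in bijection with s2
  have hoff : (s1.filter fun p => ¬ p.1 = p.2).card = s2.card := by
    have ne1 : ∀ p ∈ s1.filter fun p => ¬ p.1 = p.2, (p.1 ∆ p.2).Nonempty := by
      intro p hp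
      simp only [hs1, Finset.mem_filter] at hp
      exact Finset.symmDiff_nonempty.mpr hp.2
    have ne2 : ∀ p ∈ s2, (p.1 ∆ p.2).Nonempty := by
      intro p hp
      simp only [hs2, Finset.mem_filter, hP2] at hp
      refine Finset.symmDiff_nonempty.mpr fun h => ?_
      rw [h] at hp
      omega
    refine Finset.card_bij'
      (fun p hp => (symmDiff p.1 {pk _ (ne1 p hp)}, symmDiff p.2 {pk _ (ne1 p hp)}))
      (fun p hp => (symmDiff p.1 {pk _ (ne2 p hp)}, symmDiff p.2 {pk _ (ne2 p hp)}))
      ?_ ?_ ?_ ?_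
    · intro p hp
      have hpk := pk_mem _ (ne1 p hp)
      simp only [Finset.mem_filter, hs1, hP1, Finset.mem_univ, true_and] at hp
      obtain ⟨⟨h1, h2, h3, h4⟩, hne⟩ := hp
      have hem : pk _ (ne1 p hp) ∈ m := hmem_m h1 h2 hpk
      simp only [hs2, Finset.mem_filter, hP2, Finset.mem_univ, true_and]
      refine ⟨symmDiff_singleton_subset h1 hem, symmDiff_singleton_subset h2 hem, ?_, ?_⟩
      · rw [symmDiff_symmDiff_singleton]; exact h3
      · rcases step_card hpk with h | h <;> rw [h] <;> omega
    · intro p hp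
      have hpk := pk_mem _ (ne2 p hp)
      have hne : p.1 ≠ p.2 := fun h => by
        have := ne2 p hp; rw [h, symmDiff_self] at this
        exact Finset.not_nonempty_empty this
      simp only [hs2, Finset.mem_filter, hP2, Finset.mem_univ, true_and] at hp
      obtain ⟨h1, h2, h3, h4⟩ := hp
      have hem : pk _ (ne2 p hp) ∈ m := hmem_m h1 h2 hpk
      simp only [Finset.mem_filter, hs1, hP1, Finset.mem_univ, true_and]
      refine ⟨⟨symmDiff_singleton_subset h1 hem, symmDiff_singleton_subset h2 hem, ?_, ?_⟩, ?_⟩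
      · rw [symmDiff_symmDiff_singleton]; exact h3
      · rcases step_card hpk with h | h <;> rw [h] <;> omega
      · intro h
        have : (symmDiff p.1 {pk _ (ne2 p hp)}) ∆ (symmDiff p.2 {pk _ (ne2 p hp)}) = ∅ := by
          rw [h, symmDiff_self]; rfl
        rw [symmDiff_symmDiff_singleton] at this
        exact hne (Finset.symmDiff_eq_empty.mp this)
    · intro p hp
      have hrw : ∀ h', pk ((symmDiff p.1 {pk _ (ne1 p hp)}) ∆ (symmDiff p.2 {pk _ (ne1 p hp)})) h'
          = pk (p.1 ∆ p.2) (ne1 p hp) :=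
        fun h' => pk_congr (symmDiff_symmDiff_singleton _ _ _) _ _
      refine Prod.ext ?_ ?_ <;> beta_reduce <;> rw [hrw] <;>
        exact symmDiff_symmDiff_cancel_right _ _
    · intro p hp
      have hrw : ∀ h', pk ((symmDiff p.1 {pk _ (ne2 p hp)}) ∆ (symmDiff p.2 {pk _ (ne2 p hp)})) h'
          = pk (p.1 ∆ p.2) (ne2 p hp) :=
        fun h' => pk_congr (symmDiff_symmDiff_singleton _ _ _) _ _
      refine Prod.ext ?_ ?_ <;> beta_reduce <;> rw [hrw] <;>
        exact symmDiff_symmDiff_cancel_right _ _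
  omega
end

section
/- Let G be a finite simple graph with edge set E. If every vertex of G has even degree, then the number of ordered pairs (A,B) of subsets of E with A△B eulerian and |A| + |B| ≡ 0 or 1 (mod 4), minus the number with A△B eulerian and |A| + |B| ≡ 2 or 3 (mod 4), equals (−1)^{⌊|E|/2⌋} 2^{|E|}. If some vertex of G has odd degree, these two counts are equal. -/
open Finset

private def eulW (n : ℕ) : ℤ := if n % 4 = 0 ∨ n % 4 = 1 then 1 else -1

private lemma eulW_eq (n : ℕ) : eulW n = (-1 : ℤ) ^ (n / 2) := by
  unfold eulW
  rcases Nat.even_or_odd (n / 2) with h | h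
  · rw [Even.neg_one_pow h, if_pos]
    obtain ⟨k, hk⟩ := h; omega
  · rw [Odd.neg_one_pow h, if_neg]
    obtain ⟨k, hk⟩ := h; omega

private lemma sum_sign_inter {α : Type*} [DecidableEq α] (E D : Finset α) (hD : D ⊆ E) :
    ∑ A ∈ E.powerset, (-1 : ℤ) ^ (A ∩ D).card = if D = ∅ then 2 ^ E.card else 0 := by
  have key := Finset.prod_add (fun e => if e ∈ D then (-1:ℤ) else 1) (fun _ => (1:ℤ)) E
  simp only [Finset.prod_const_one, mul_one] at key
  have hL : ∀ A : Finset α, (∏ e ∈ A, if e ∈ D then (-1:ℤ) else 1) = (-1)^(A ∩ D).card := by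
    intro A
    rw [Finset.prod_ite, Finset.prod_const, Finset.prod_const, one_pow, mul_one,
        Finset.filter_mem_eq_inter]
  rw [Finset.sum_congr rfl (fun A _ => (hL A).symm), ← key]
  by_cases hDe : D = ∅
  · subst hDe
    simp
  · rw [if_neg hDe]
    obtain ⟨e, he⟩ := Finset.nonempty_iff_ne_empty.2 hDe
    exact Finset.prod_eq_zero (hD he) (by simp [he])

open scoped Classical in
private lemma main_sum {V : Type*} [DecidableEq V] (E : Finset (Sym2 V)) :
    ∑ p ∈ (E.powerset ×ˢ E.powerset).filter (fun p => IsEul (symmDiff p.1 p.2)),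
      eulW (p.1.card + p.2.card)
    = if IsEul E then (-1:ℤ)^(E.card/2) * 2^E.card else 0 := by
  have hreix :
      ∑ p ∈ (E.powerset ×ˢ E.powerset).filter (fun p => IsEul (symmDiff p.1 p.2)),
        eulW (p.1.card + p.2.card)
      = ∑ q ∈ (E.powerset.filter IsEul) ×ˢ E.powerset,
          eulW (q.2.card + (symmDiff q.2 q.1).card) := by
    refine Finset.sum_bij' (fun p _ => (symmDiff p.1 p.2, p.1))
      (fun q _ => (q.2, symmDiff q.2 q.1)) ?_ ?_ ?_ ?_ ?_
    · intro p hp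
      simp only [Finset.mem_filter, Finset.mem_product, Finset.mem_powerset] at hp ⊢
      exact ⟨⟨symmDiff_le_sup.trans (sup_le hp.1.1 hp.1.2), hp.2⟩, hp.1.1⟩
    · intro q hq
      simp only [Finset.mem_filter, Finset.mem_product, Finset.mem_powerset] at hq ⊢
      refine ⟨⟨hq.2, symmDiff_le_sup.trans (sup_le hq.2 hq.1.1)⟩, ?_⟩
      rw [symmDiff_symmDiff_cancel_left]
      exact hq.1.2
    · intro p hp
      simp [symmDiff_symmDiff_cancel_left]
    · intro q hq
      simp [symmDiff_symmDiff_cancel_left]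
    · intro p hp
      rw [symmDiff_symmDiff_cancel_left]
  rw [hreix, Finset.sum_product]
  have hinner : ∀ C ∈ E.powerset.filter IsEul,
      (∑ A ∈ E.powerset, eulW (A.card + (symmDiff A C).card))
      = (-1:ℤ)^(C.card/2) * (if C = E then 2 ^ E.card else 0) := by
    intro C hC
    rw [Finset.mem_filter, Finset.mem_powerset] at hC
    have step1 : ∀ A ∈ E.powerset,
        eulW (A.card + (symmDiff A C).card)
        = (-1:ℤ)^(C.card/2) * (-1:ℤ)^((A ∩ (E \ C)).card) := by
      intro A hA
      rw [Finset.mem_powerset] at hA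
      have hsd : A \ C = A ∩ (E \ C) := by
        ext x
        simp only [Finset.mem_sdiff, Finset.mem_inter]
        exact ⟨fun ⟨h1, h2⟩ => ⟨h1, hA h1, h2⟩, fun ⟨h1, _, h3⟩ => ⟨h1, h3⟩⟩
      have h3 : (symmDiff A C).card = (A \ C).card + (C \ A).card := by
        rw [symmDiff_def]
        exact Finset.card_union_of_disjoint disjoint_sdiff_sdiff
      have h1 := Finset.card_inter_add_card_sdiff A C
      have h2 := Finset.card_inter_add_card_sdiff C A
      have h4 : (A ∩ C).card = (C ∩ A).card := by rw [Finset.inter_comm]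
      have hcard : A.card + (symmDiff A C).card = C.card + 2 * (A \ C).card := by omega
      have hdiv : (C.card + 2 * (A \ C).card) / 2 = C.card / 2 + (A \ C).card := by omega
      rw [eulW_eq, hcard, hdiv, pow_add, hsd]
    rw [Finset.sum_congr rfl step1, ← Finset.mul_sum,
        sum_sign_inter E (E \ C) (Finset.sdiff_subset)]
    congr 1
    have : E \ C = ∅ ↔ C = E := by
      rw [Finset.sdiff_eq_empty_iff_subset]
      exact ⟨fun h => hC.1.antisymm h, fun h => h ▸ le_refl _⟩
    by_cases h : C = E
    · rw [if_pos (this.2 h), if_pos h]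
    · rw [if_neg (fun he => h (this.1 he)), if_neg h]
  rw [Finset.sum_congr rfl hinner]
  have hrw : ∀ C ∈ E.powerset.filter IsEul,
      (-1:ℤ)^(C.card/2) * (if C = E then 2 ^ E.card else 0)
      = (if C = E then (-1:ℤ)^(E.card/2) * 2 ^ E.card else 0) := by
    intro C _
    by_cases h : C = E
    · subst h; simp
    · simp [h]
  rw [Finset.sum_congr rfl hrw, Finset.sum_ite_eq' (E.powerset.filter IsEul) E
    (fun _ => (-1:ℤ)^(E.card/2) * 2 ^ E.card)]
  by_cases h : IsEul E
  · rw [if_pos (by simp [h]), if_pos h]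
  · rw [if_neg (by simp [h]), if_neg h]

/-- If every vertex of `G` has even degree, then the number of ordered pairs `(A,B)` of
subsets of `E` with `A △ B` eulerian and `|A| + |B| ≡ 0` or `1 (mod 4)`, minus the number
with `|A| + |B| ≡ 2` or `3 (mod 4)`, equals `(−1)^{⌊|E|/2⌋} 2^{|E|}`.  If some vertex has
odd degree, the two counts are equal. -/
theorem stmt_11 {V : Type*} [Fintype V] [DecidableEq V] (G : SimpleGraph V)
    [DecidableRel G.Adj] :
    ((∀ v : V, Even (G.degree v)) →
      (Nat.card {p : Finset (Sym2 V) × Finset (Sym2 V) //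
          p.1 ⊆ G.edgeFinset ∧ p.2 ⊆ G.edgeFinset ∧ IsEul (symmDiff p.1 p.2) ∧
            ((p.1.card + p.2.card) % 4 = 0 ∨ (p.1.card + p.2.card) % 4 = 1)} : ℤ) -
        (Nat.card {p : Finset (Sym2 V) × Finset (Sym2 V) //
          p.1 ⊆ G.edgeFinset ∧ p.2 ⊆ G.edgeFinset ∧ IsEul (symmDiff p.1 p.2) ∧
            ((p.1.card + p.2.card) % 4 = 2 ∨ (p.1.card + p.2.card) % 4 = 3)} : ℤ) =
        (-1 : ℤ) ^ (G.edgeFinset.card / 2) * 2 ^ G.edgeFinset.card) ∧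
    ((∃ v : V, Odd (G.degree v)) →
      Nat.card {p : Finset (Sym2 V) × Finset (Sym2 V) //
          p.1 ⊆ G.edgeFinset ∧ p.2 ⊆ G.edgeFinset ∧ IsEul (symmDiff p.1 p.2) ∧
            ((p.1.card + p.2.card) % 4 = 0 ∨ (p.1.card + p.2.card) % 4 = 1)} =
        Nat.card {p : Finset (Sym2 V) × Finset (Sym2 V) //
          p.1 ⊆ G.edgeFinset ∧ p.2 ⊆ G.edgeFinset ∧ IsEul (symmDiff p.1 p.2) ∧
            ((p.1.card + p.2.card) % 4 = 2 ∨ (p.1.card + p.2.card) % 4 = 3)}) := by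
  classical
  set E := G.edgeFinset with hE
  set P := (E.powerset ×ˢ E.powerset).filter (fun p => IsEul (symmDiff p.1 p.2)) with hP
  -- counts as finset cards
  have hcard1 : Nat.card {p : Finset (Sym2 V) × Finset (Sym2 V) //
          p.1 ⊆ G.edgeFinset ∧ p.2 ⊆ G.edgeFinset ∧ IsEul (symmDiff p.1 p.2) ∧
            ((p.1.card + p.2.card) % 4 = 0 ∨ (p.1.card + p.2.card) % 4 = 1)}
      = (P.filter (fun p => (p.1.card + p.2.card) % 4 = 0 ∨ (p.1.card + p.2.card) % 4 = 1)).card := by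
    rw [Nat.card_eq_fintype_card, Fintype.card_subtype]
    congr 1
    ext p
    simp only [Finset.mem_filter, Finset.mem_univ, true_and, hP, Finset.mem_product,
      Finset.mem_powerset, ← hE]
    tauto
  have hcard2 : Nat.card {p : Finset (Sym2 V) × Finset (Sym2 V) //
          p.1 ⊆ G.edgeFinset ∧ p.2 ⊆ G.edgeFinset ∧ IsEul (symmDiff p.1 p.2) ∧
            ((p.1.card + p.2.card) % 4 = 2 ∨ (p.1.card + p.2.card) % 4 = 3)}
      = (P.filter (fun p => (p.1.card + p.2.card) % 4 = 2 ∨ (p.1.card + p.2.card) % 4 = 3)).card := by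
    rw [Nat.card_eq_fintype_card, Fintype.card_subtype]
    congr 1
    ext p
    simp only [Finset.mem_filter, Finset.mem_univ, true_and, hP, Finset.mem_product,
      Finset.mem_powerset, ← hE]
    tauto
  have hfilter2 : P.filter (fun p : Finset (Sym2 V) × Finset (Sym2 V) =>
        (p.1.card + p.2.card) % 4 = 2 ∨ (p.1.card + p.2.card) % 4 = 3)
      = P.filter (fun p => ¬((p.1.card + p.2.card) % 4 = 0 ∨ (p.1.card + p.2.card) % 4 = 1)) := by
    apply Finset.filter_congr
    intro p _
    constructor <;> intro h <;> omega
  have hsplit : (∑ p ∈ P, eulW (p.1.card + p.2.card))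
      = ((P.filter (fun p => (p.1.card + p.2.card) % 4 = 0 ∨ (p.1.card + p.2.card) % 4 = 1)).card : ℤ)
        - ((P.filter (fun p => (p.1.card + p.2.card) % 4 = 2 ∨ (p.1.card + p.2.card) % 4 = 3)).card : ℤ) := by
    have e1 : ∑ p ∈ P.filter (fun p => (p.1.card + p.2.card) % 4 = 0 ∨ (p.1.card + p.2.card) % 4 = 1),
        eulW (p.1.card + p.2.card)
        = ((P.filter (fun p => (p.1.card + p.2.card) % 4 = 0 ∨ (p.1.card + p.2.card) % 4 = 1)).card : ℤ) := by
      have h : ∀ p ∈ P.filter (fun p => (p.1.card + p.2.card) % 4 = 0 ∨ (p.1.card + p.2.card) % 4 = 1),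
          eulW (p.1.card + p.2.card) = (1:ℤ) := by
        intro p hp
        rw [Finset.mem_filter] at hp
        unfold eulW
        exact if_pos hp.2
      rw [Finset.sum_congr rfl h, Finset.sum_const, nsmul_eq_mul, mul_one]
    have e2 : ∑ p ∈ P.filter (fun p => ¬((p.1.card + p.2.card) % 4 = 0 ∨ (p.1.card + p.2.card) % 4 = 1)),
        eulW (p.1.card + p.2.card)
        = -((P.filter (fun p => ¬((p.1.card + p.2.card) % 4 = 0 ∨ (p.1.card + p.2.card) % 4 = 1))).card : ℤ) := by
      have h : ∀ p ∈ P.filter (fun p => ¬((p.1.card + p.2.card) % 4 = 0 ∨ (p.1.card + p.2.card) % 4 = 1)),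
          eulW (p.1.card + p.2.card) = (-1:ℤ) := by
        intro p hp
        rw [Finset.mem_filter] at hp
        unfold eulW
        exact if_neg hp.2
      rw [Finset.sum_congr rfl h, Finset.sum_const, nsmul_eq_mul, mul_neg_one]
    rw [hfilter2,
      ← Finset.sum_filter_add_sum_filter_not P
        (fun p => (p.1.card + p.2.card) % 4 = 0 ∨ (p.1.card + p.2.card) % 4 = 1)
        (fun p => eulW (p.1.card + p.2.card)), e1, e2]
    ring
  have hEul : IsEul E ↔ ∀ v : V, Even (G.degree v) := by
    have hdeg : ∀ v : V, Nat.card {e : Sym2 V // e ∈ E ∧ v ∈ e} = G.degree v := by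
      intro v
      rw [Nat.card_eq_fintype_card, Fintype.card_subtype,
        ← G.card_incidenceFinset_eq_degree v]
      congr 1
      ext e
      simp [SimpleGraph.mem_incidenceFinset, SimpleGraph.incidenceSet, hE,
        SimpleGraph.mem_edgeFinset]
    unfold IsEul
    constructor
    · intro h v; rw [← hdeg v]; exact h v
    · intro h v; rw [hdeg v]; exact h v
  have hmain := main_sum (V := V) E
  rw [← hP] at hmain
  constructor
  · intro h
    rw [hcard1, hcard2, ← hsplit, hmain, if_pos (hEul.2 h), hE]
  · rintro ⟨v, hv⟩
    have hne : ¬ IsEul E := fun he => (Nat.not_even_iff_odd.2 hv) (hEul.1 he v)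
    rw [hmain, if_neg hne] at hsplit
    have := hsplit.symm
    rw [hcard1, hcard2]
    omega
end

section
/- Let G be a finite simple graph with edge set E. Then 3^{|E|} · (N₁ − N₂) = (M₁ − M₂) · F(G;4), where N₁ (respectively N₂) is the number of ordered triples (A,B,C) of subsets of E with A△B and B△C both eulerian and |A| + |B| + |C| mod 6 lying in {0,1,2} (respectively in {3,4,5}), M₁ (respectively M₂) is the number of arbitrary ordered triples (A,B,C) of subsets of E with |A| + |B| + |C| mod 6 in {0,1,2} (respectively in {3,4,5}), and F(G;4) is the number of ordered pairs (a,b) of eulerian subsets of E with a ∪ b = E. (Note that |A| + |B| + |C| mod 6 ∈ {0,1,2} precisely when ⌊(|A|+|B|+|C|)/3⌋ is even.) -/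
namespace Stmt13Aux

open Finset
open scoped symmDiff

noncomputable def eps (n : ℕ) : ℂ := if n % 6 < 3 then 1 else -1

lemma exists_omega : ∃ ω : ℂ, ω^2 + ω + 1 = 0 := by
  refine ⟨(-1 + Complex.I * (Real.sqrt 3 : ℝ)) / 2, ?_⟩
  have hsq : ((Real.sqrt 3 : ℝ) : ℂ)^2 = 3 := by
    rw [← Complex.ofReal_pow]
    norm_num [Real.sq_sqrt]
  have hx : (Complex.I * ((Real.sqrt 3 : ℝ) : ℂ))^2 = -3 := by
    rw [mul_pow, Complex.I_sq, hsq]; ring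
  linear_combination (1/4 : ℂ) * hx

lemma eps_formula (ω : ℂ) (hω : ω^2 + ω + 1 = 0) (k : ℕ) :
    eps k = (1/3) * ((1 - (ω - ω^2)) * (-ω^2)^k + (-1:ℂ)^k + (1 + (ω - ω^2)) * (-ω)^k) := by
  have h3 : ω^3 = 1 := by linear_combination (ω - 1) * hω
  have h6a : ((-1 : ℂ))^6 = 1 := by norm_num
  have h6b : (-ω)^6 = 1 := by
    calc (-ω)^6 = (ω^3)^2 := by ring
    _ = 1 := by rw [h3]; norm_num
  have h6c : (-ω^2)^6 = 1 := by
    calc (-ω^2)^6 = ((ω^3)^2)^2 := by ring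
    _ = 1 := by rw [h3]; norm_num
  have hper : ∀ z : ℂ, z^6 = 1 → z^k = z^(k % 6) := by
    intro z h
    conv_lhs => rw [← Nat.div_add_mod k 6]
    rw [pow_add, pow_mul, h, one_pow, one_mul]
  rw [hper _ h6c, hper _ h6a, hper _ h6b]
  have heps : eps k = if k % 6 < 3 then 1 else -1 := rfl
  rw [heps]
  have hk : k % 6 < 6 := Nat.mod_lt _ (by norm_num)
  set r := k % 6 with hr
  clear_value r
  interval_cases r
  · norm_num; ring
  · norm_num; linear_combination (1/3 : ℂ) * (ω^2 - 3*ω + 4) * hω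
  · norm_num; linear_combination (1/3 : ℂ) * (-ω^4 + 2*ω^3 - ω^2 - 2*ω + 2) * hω
  · norm_num; linear_combination (1/3 : ℂ) * (ω^6 - 2*ω^5 + 2*ω^4 - ω^3 + 2*ω - 2) * hω
  · norm_num; linear_combination (1/3 : ℂ) * (-ω^8 + 2*ω^7 - 2*ω^6 + 3*ω^4 - 4*ω^3 + 4*ω - 4) * hω
  · norm_num; linear_combination (1/3 : ℂ) * (ω^10 - 2*ω^9 + 2*ω^8 - 2*ω^6 + ω^5 + 2*ω^4 - 2*ω^3 + 2*ω - 2) * hω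

lemma count_sub {β : Type*} (s : Finset β) (n : β → ℕ) :
    ((s.filter fun t => n t % 6 ∈ ({0,1,2} : Set ℕ)).card : ℂ)
      - ((s.filter fun t => n t % 6 ∈ ({3,4,5} : Set ℕ)).card : ℂ)
    = ∑ t ∈ s, eps (n t) := by
  classical
  rw [← Finset.sum_filter_add_sum_filter_not s (fun t => n t % 6 < 3) (fun t => eps (n t))]
  have h1 : s.filter (fun t => n t % 6 ∈ ({0,1,2} : Set ℕ)) = s.filter (fun t => n t % 6 < 3) := by
    apply Finset.filter_congr; intro t _; simp [Set.mem_insert_iff]; omega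
  have h2 : s.filter (fun t => n t % 6 ∈ ({3,4,5} : Set ℕ)) = s.filter (fun t => ¬ (n t % 6 < 3)) := by
    apply Finset.filter_congr; intro t _; simp [Set.mem_insert_iff]; omega
  have e1 : ∑ t ∈ s.filter (fun t => n t % 6 < 3), eps (n t)
      = ((s.filter (fun t => n t % 6 < 3)).card : ℂ) := by
    rw [Finset.sum_congr rfl (g := fun _ => (1:ℂ)) (fun t ht => by
      simp only [Finset.mem_filter] at ht; simp [eps, ht.2])]
    simp
  have e2 : ∑ t ∈ s.filter (fun t => ¬ (n t % 6 < 3)), eps (n t)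
      = -((s.filter (fun t => ¬ (n t % 6 < 3))).card : ℂ) := by
    rw [Finset.sum_congr rfl (g := fun _ => (-1:ℂ)) (fun t ht => by
      simp only [Finset.mem_filter] at ht; simp [eps, ht.2])]
    simp
  rw [h1, h2, e1, e2]; ring

lemma natCard_eq {β : Type*} [Fintype β] (p : β → Prop) [DecidablePred p] :
    (Nat.card {x // p x}) = (Finset.univ.filter p).card := by
  rw [Nat.card_eq_fintype_card, Fintype.card_subtype]

variable {γ : Type*} [DecidableEq γ]

lemma sum_pow_card (E : Finset γ) (z : ℂ) :
    ∑ A ∈ E.powerset, z ^ A.card = (1 + z) ^ E.card := by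
  calc ∑ A ∈ E.powerset, z ^ A.card
      = ∑ A ∈ E.powerset, (∏ i ∈ A, z) * ∏ i ∈ E \ A, 1 := by
        simp [Finset.prod_const]
    _ = ∏ i ∈ E, (z + 1) := (Finset.prod_add _ _ _).symm
    _ = (1 + z) ^ E.card := by rw [Finset.prod_const]; ring

lemma all_sum (E : Finset γ) (z : ℂ) :
    ∑ t ∈ E.powerset ×ˢ E.powerset ×ˢ E.powerset, z ^ (t.1.card + t.2.1.card + t.2.2.card)
      = ((1 + z) ^ E.card) ^ 3 := by
  have pair : ∑ y ∈ E.powerset ×ˢ E.powerset, z ^ (y.1.card + y.2.card)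
      = ((1 + z) ^ E.card) ^ 2 := by
    rw [Finset.sum_product]
    calc ∑ B ∈ E.powerset, ∑ C ∈ E.powerset, z ^ (B.card + C.card)
        = ∑ B ∈ E.powerset, z ^ B.card * ∑ C ∈ E.powerset, z ^ C.card := by
          apply Finset.sum_congr rfl; intro B _
          rw [Finset.mul_sum]
          apply Finset.sum_congr rfl; intro C _
          rw [pow_add]
      _ = (∑ B ∈ E.powerset, z ^ B.card) * ∑ C ∈ E.powerset, z ^ C.card := by
          rw [← Finset.sum_mul]
      _ = ((1 + z) ^ E.card) ^ 2 := by rw [sum_pow_card]; ring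
  rw [Finset.sum_product]
  calc ∑ A ∈ E.powerset, ∑ y ∈ E.powerset ×ˢ E.powerset, z ^ (A.card + y.1.card + y.2.card)
      = ∑ A ∈ E.powerset, z ^ A.card * ∑ y ∈ E.powerset ×ˢ E.powerset, z ^ (y.1.card + y.2.card) := by
        apply Finset.sum_congr rfl; intro A _
        rw [Finset.mul_sum]
        apply Finset.sum_congr rfl; intro y _
        rw [Nat.add_assoc, pow_add]
    _ = (∑ A ∈ E.powerset, z ^ A.card) * ∑ y ∈ E.powerset ×ˢ E.powerset, z ^ (y.1.card + y.2.card) := by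
        rw [← Finset.sum_mul]
    _ = ((1 + z) ^ E.card) ^ 3 := by rw [sum_pow_card, pair]; ring

lemma eps_expand {β : Type*} (s : Finset β) (n : β → ℕ) (ω : ℂ) (hω : ω^2 + ω + 1 = 0) :
    ∑ t ∈ s, eps (n t)
      = (1/3) * ((1 - (ω - ω^2)) * ∑ t ∈ s, (-ω^2)^(n t) + ∑ t ∈ s, (-1:ℂ)^(n t)
          + (1 + (ω - ω^2)) * ∑ t ∈ s, (-ω)^(n t)) := by
  symm
  rw [Finset.mul_sum, Finset.mul_sum, ← Finset.sum_add_distrib, ← Finset.sum_add_distrib,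
    Finset.mul_sum]
  exact Finset.sum_congr rfl fun t _ => (eps_formula ω hω (n t)).symm

lemma pow_card_eq_prod (E S : Finset γ) (h : S ⊆ E) (z : ℂ) :
    z ^ S.card = ∏ e ∈ E, (if e ∈ S then z else 1) := by
  rw [Finset.prod_ite_mem, Finset.inter_eq_right.2 h, Finset.prod_const]

lemma inner_sum_eq_prod (E X Y : Finset γ) (hX : X ⊆ E) (hY : Y ⊆ E) (z : ℂ) :
    ∑ B ∈ E.powerset, z ^ ((X ∆ B).card + B.card + (Y ∆ B).card)
      = ∏ e ∈ E, (z ^ ((if e ∈ X then 0 else 1) + 1 + (if e ∈ Y then 0 else 1))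
                 + z ^ ((if e ∈ X then 1 else 0) + (if e ∈ Y then 1 else 0))) := by
  rw [Finset.prod_add]
  apply Finset.sum_congr rfl
  intro B hB
  rw [Finset.mem_powerset] at hB
  have hXB : X ∆ B ⊆ E := le_trans symmDiff_le_sup (Finset.union_subset hX hB)
  have hYB : Y ∆ B ⊆ E := le_trans symmDiff_le_sup (Finset.union_subset hY hB)
  rw [pow_add, pow_add, pow_card_eq_prod E _ hXB z, pow_card_eq_prod E B hB z,
    pow_card_eq_prod E _ hYB z, ← Finset.prod_mul_distrib, ← Finset.prod_mul_distrib]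
  rw [← Finset.union_sdiff_of_subset hB, Finset.prod_union Finset.disjoint_sdiff,
    Finset.union_sdiff_of_subset hB]
  congr 1
  · apply Finset.prod_congr rfl
    intro e he
    have heB : e ∈ B := he
    by_cases hx : e ∈ X <;> by_cases hy : e ∈ Y <;>
      simp [Finset.mem_symmDiff, hx, hy, heB] <;> ring
  · apply Finset.prod_congr rfl
    intro e he
    have heB : e ∉ B := (Finset.mem_sdiff.1 he).2
    by_cases hx : e ∈ X <;> by_cases hy : e ∈ Y <;>
      simp [Finset.mem_symmDiff, hx, hy, heB] <;> ring

lemma prod_factor (E X Y : Finset γ) (hX : X ⊆ E) (hY : Y ⊆ E) (z : ℂ) (hz : z ^ 3 = -1) :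
    ∏ e ∈ E, (z ^ ((if e ∈ X then 0 else 1) + 1 + (if e ∈ Y then 0 else 1))
             + z ^ ((if e ∈ X then 1 else 0) + (if e ∈ Y then 1 else 0)))
      = if X ∪ Y = E then (z + z ^ 2) ^ E.card else 0 := by
  by_cases hU : X ∪ Y = E
  · rw [if_pos hU]
    rw [Finset.prod_congr rfl (g := fun _ => z + z ^ 2) (fun e he => ?_), Finset.prod_const]
    have heXY : e ∈ X ∨ e ∈ Y := by
      rw [← Finset.mem_union, hU]; exact he
    by_cases hx : e ∈ X
    · by_cases hy : e ∈ Y <;> simp [hx, hy] <;> ring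
    · have hy : e ∈ Y := heXY.resolve_left hx
      simp [hx, hy]
      ring
  · rw [if_neg hU]
    have hsub : X ∪ Y ⊆ E := Finset.union_subset hX hY
    have : ∃ e ∈ E, e ∉ X ∪ Y := by
      by_contra h
      push_neg at h
      exact hU (Finset.Subset.antisymm hsub h)
    obtain ⟨e, he, hne⟩ := this
    apply Finset.prod_eq_zero he
    rw [Finset.mem_union] at hne
    push_neg at hne
    simp only [hne.1, hne.2, if_neg, ite_false]
    norm_num
    linear_combination hz

lemma eul_sum [Fintype γ] (E : Finset γ) (W : Finset γ → Prop) [DecidablePred W]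
    (z : ℂ) (hz : z ^ 3 = -1) :
    ∑ t ∈ (E.powerset ×ˢ E.powerset ×ˢ E.powerset).filter
        (fun t => W (t.1 ∆ t.2.1) ∧ W (t.2.1 ∆ t.2.2)),
      z ^ (t.1.card + t.2.1.card + t.2.2.card)
    = (z + z ^ 2) ^ E.card *
      ((Finset.univ.filter (fun q : Finset γ × Finset γ => W q.1 ∧ W q.2 ∧ q.1 ∪ q.2 = E)).card : ℂ) := by
  classical
  have step1 :
      ∑ t ∈ (E.powerset ×ˢ E.powerset ×ˢ E.powerset).filter
          (fun t => W (t.1 ∆ t.2.1) ∧ W (t.2.1 ∆ t.2.2)),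
        z ^ (t.1.card + t.2.1.card + t.2.2.card)
      = ∑ q ∈ ((E.powerset ×ˢ E.powerset).filter (fun q => W q.1 ∧ W q.2)) ×ˢ E.powerset,
          z ^ ((q.1.1 ∆ q.2).card + q.2.card + (q.1.2 ∆ q.2).card) := by
    apply Finset.sum_nbij' (i := fun t => ((t.1 ∆ t.2.1, t.2.1 ∆ t.2.2), t.2.1))
      (j := fun q => (q.1.1 ∆ q.2, q.2, q.1.2 ∆ q.2))
    · intro t ht
      simp only [Finset.mem_filter, Finset.mem_product, Finset.mem_powerset] at ht ⊢
      obtain ⟨⟨h1, h2, h3⟩, hW1, hW2⟩ := ht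
      exact ⟨⟨⟨le_trans symmDiff_le_sup (Finset.union_subset h1 h2),
        le_trans symmDiff_le_sup (Finset.union_subset h2 h3)⟩, hW1, hW2⟩, h2⟩
    · intro q hq
      simp only [Finset.mem_filter, Finset.mem_product, Finset.mem_powerset] at hq ⊢
      obtain ⟨⟨⟨h1, h2⟩, hW1, hW2⟩, hB⟩ := hq
      refine ⟨⟨le_trans symmDiff_le_sup (Finset.union_subset h1 hB), hB,
        le_trans symmDiff_le_sup (Finset.union_subset h2 hB)⟩, ?_, ?_⟩
      · rwa [symmDiff_symmDiff_cancel_right]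
      · rwa [symmDiff_comm q.1.2 q.2, symmDiff_symmDiff_cancel_left]
    · rintro ⟨A, B, C⟩ -
      simp only [Prod.mk.injEq]
      refine ⟨?_, trivial, ?_⟩
      · rw [symmDiff_symmDiff_cancel_right]
      · rw [symmDiff_comm B C, symmDiff_symmDiff_cancel_right]
    · rintro ⟨⟨X, Y⟩, B⟩ -
      simp only [Prod.mk.injEq]
      refine ⟨⟨?_, ?_⟩, trivial⟩
      · rw [symmDiff_symmDiff_cancel_right]
      · rw [symmDiff_comm Y B, symmDiff_symmDiff_cancel_left]
    · intro t ht
      simp only [Finset.mem_filter, Finset.mem_product, Finset.mem_powerset] at ht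
      congr 1
      rw [symmDiff_symmDiff_cancel_right, symmDiff_comm t.2.1 t.2.2,
        symmDiff_symmDiff_cancel_right]
  rw [step1, Finset.sum_product]
  have step2 : ∀ q ∈ (E.powerset ×ˢ E.powerset).filter (fun q => W q.1 ∧ W q.2),
      ∑ B ∈ E.powerset, z ^ ((q.1 ∆ B).card + B.card + (q.2 ∆ B).card)
      = if q.1 ∪ q.2 = E then (z + z ^ 2) ^ E.card else 0 := by
    intro q hq
    simp only [Finset.mem_filter, Finset.mem_product, Finset.mem_powerset] at hq
    rw [inner_sum_eq_prod E q.1 q.2 hq.1.1 hq.1.2 z,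
      prod_factor E q.1 q.2 hq.1.1 hq.1.2 z hz]
  rw [Finset.sum_congr rfl step2, ← Finset.sum_filter, Finset.sum_const, nsmul_eq_mul]
  have hset : ((E.powerset ×ˢ E.powerset).filter (fun q => W q.1 ∧ W q.2)).filter
        (fun q => q.1 ∪ q.2 = E)
      = Finset.univ.filter (fun q : Finset γ × Finset γ => W q.1 ∧ W q.2 ∧ q.1 ∪ q.2 = E) := by
    ext q
    simp only [Finset.mem_filter, Finset.mem_product, Finset.mem_powerset, Finset.mem_univ,
      true_and]
    constructor
    · rintro ⟨⟨_, hW⟩, hU⟩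
      exact ⟨hW.1, hW.2, hU⟩
    · rintro ⟨h1, h2, hU⟩
      exact ⟨⟨⟨by rw [← hU]; exact Finset.subset_union_left,
        by rw [← hU]; exact Finset.subset_union_right⟩, h1, h2⟩, hU⟩
  rw [hset]
  ring

theorem main [Fintype γ] (E : Finset γ) (W : Finset γ → Prop) :
    3 ^ E.card *
      ((Nat.card {p : Finset γ × Finset γ × Finset γ //
          p.1 ⊆ E ∧ p.2.1 ⊆ E ∧ p.2.2 ⊆ E ∧ W (p.1 ∆ p.2.1) ∧ W (p.2.1 ∆ p.2.2) ∧
            (p.1.card + p.2.1.card + p.2.2.card) % 6 ∈ ({0, 1, 2} : Set ℕ)} : ℤ) -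
        (Nat.card {p : Finset γ × Finset γ × Finset γ //
          p.1 ⊆ E ∧ p.2.1 ⊆ E ∧ p.2.2 ⊆ E ∧ W (p.1 ∆ p.2.1) ∧ W (p.2.1 ∆ p.2.2) ∧
            (p.1.card + p.2.1.card + p.2.2.card) % 6 ∈ ({3, 4, 5} : Set ℕ)} : ℤ)) =
      ((Nat.card {p : Finset γ × Finset γ × Finset γ //
          p.1 ⊆ E ∧ p.2.1 ⊆ E ∧ p.2.2 ⊆ E ∧
            (p.1.card + p.2.1.card + p.2.2.card) % 6 ∈ ({0, 1, 2} : Set ℕ)} : ℤ) -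
        (Nat.card {p : Finset γ × Finset γ × Finset γ //
          p.1 ⊆ E ∧ p.2.1 ⊆ E ∧ p.2.2 ⊆ E ∧
            (p.1.card + p.2.1.card + p.2.2.card) % 6 ∈ ({3, 4, 5} : Set ℕ)} : ℤ)) *
        (Nat.card {p : Finset γ × Finset γ //
          W p.1 ∧ W p.2 ∧ p.1 ∪ p.2 = E} : ℤ) := by
  classical
  obtain ⟨ω, hω⟩ := exists_omega
  set m := E.card with hm
  set nf : Finset γ × Finset γ × Finset γ → ℕ :=
    fun t => t.1.card + t.2.1.card + t.2.2.card with hnf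
  set TA : Finset (Finset γ × Finset γ × Finset γ) :=
    E.powerset ×ˢ E.powerset ×ˢ E.powerset with hTA
  set TE : Finset (Finset γ × Finset γ × Finset γ) :=
    TA.filter (fun t => W (t.1 ∆ t.2.1) ∧ W (t.2.1 ∆ t.2.2)) with hTE
  set Fc : ℕ :=
    (Finset.univ.filter (fun q : Finset γ × Finset γ => W q.1 ∧ W q.2 ∧ q.1 ∪ q.2 = E)).card
    with hFc
  -- identify the Nat.cards with filter cards
  have hNcard : ∀ c : Set ℕ, (hc : DecidablePred (· ∈ c)) →
      Nat.card {p : Finset γ × Finset γ × Finset γ //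
          p.1 ⊆ E ∧ p.2.1 ⊆ E ∧ p.2.2 ⊆ E ∧ W (p.1 ∆ p.2.1) ∧ W (p.2.1 ∆ p.2.2) ∧
            nf p % 6 ∈ c}
        = (TE.filter (fun t => nf t % 6 ∈ c)).card := by
    intro c hc
    rw [natCard_eq]
    congr 1
    ext p
    simp only [hTE, hTA, Finset.mem_filter, Finset.mem_product, Finset.mem_powerset,
      Finset.mem_univ, true_and]
    tauto
  have hMcard : ∀ c : Set ℕ, (hc : DecidablePred (· ∈ c)) →
      Nat.card {p : Finset γ × Finset γ × Finset γ //
          p.1 ⊆ E ∧ p.2.1 ⊆ E ∧ p.2.2 ⊆ E ∧ nf p % 6 ∈ c}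
        = (TA.filter (fun t => nf t % 6 ∈ c)).card := by
    intro c hc
    rw [natCard_eq]
    congr 1
    ext p
    simp only [hTA, Finset.mem_filter, Finset.mem_product, Finset.mem_powerset,
      Finset.mem_univ, true_and]
    tauto
  have hFcard : Nat.card {p : Finset γ × Finset γ // W p.1 ∧ W p.2 ∧ p.1 ∪ p.2 = E} = Fc := by
    rw [natCard_eq]
  -- key identity for each z with z³ = -1
  have key : ∀ z : ℂ, z ^ 3 = -1 →
      (3:ℂ)^m * ∑ t ∈ TE, z ^ nf t = ((1 + z)^m)^3 * (Fc : ℂ) := by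
    intro z hz
    rw [hTE, hTA]
    rw [eul_sum E W z hz]
    have h31 : ((1 + z)^m)^3 = 3^m * (z + z^2)^m := by
      calc ((1 + z)^m)^3 = ((1 + z)^3)^m := by rw [← pow_mul, ← pow_mul, Nat.mul_comm]
        _ = (3*(z + z^2))^m := by rw [show (1 + z)^3 = 3*(z + z^2) by linear_combination hz]
        _ = 3^m * (z + z^2)^m := mul_pow _ _ _
    rw [h31]
    ring
  have hz1 : ((-1 : ℂ)) ^ 3 = -1 := by norm_num
  have hz0 : (-ω) ^ 3 = -1 := by linear_combination (1 - ω) * hω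
  have hz2 : (-ω^2) ^ 3 = -1 := by linear_combination ((1 - ω)*(ω^3 + 1)) * hω
  -- complex-number version
  have hC : (3:ℂ)^m *
      (((TE.filter (fun t => nf t % 6 ∈ ({0,1,2} : Set ℕ))).card : ℂ)
        - ((TE.filter (fun t => nf t % 6 ∈ ({3,4,5} : Set ℕ))).card : ℂ)) =
      (((TA.filter (fun t => nf t % 6 ∈ ({0,1,2} : Set ℕ))).card : ℂ)
        - ((TA.filter (fun t => nf t % 6 ∈ ({3,4,5} : Set ℕ))).card : ℂ)) * (Fc : ℂ) := by
    rw [count_sub TE nf, count_sub TA nf]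
    rw [eps_expand TE nf ω hω, eps_expand TA nf ω hω]
    rw [all_sum E ((-ω^2)), all_sum E (-1 : ℂ), all_sum E (-ω)]
    calc (3:ℂ)^m * ((1/3) * ((1 - (ω - ω^2)) * ∑ t ∈ TE, (-ω^2)^(nf t)
            + ∑ t ∈ TE, (-1:ℂ)^(nf t) + (1 + (ω - ω^2)) * ∑ t ∈ TE, (-ω)^(nf t)))
        = (1/3) * ((1 - (ω - ω^2)) * ((3:ℂ)^m * ∑ t ∈ TE, (-ω^2)^(nf t))
            + ((3:ℂ)^m * ∑ t ∈ TE, (-1:ℂ)^(nf t))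
            + (1 + (ω - ω^2)) * ((3:ℂ)^m * ∑ t ∈ TE, (-ω)^(nf t))) := by ring
      _ = (1/3) * ((1 - (ω - ω^2)) * (((1 + -ω^2)^m)^3 * (Fc : ℂ))
            + (((1 + -1)^m)^3 * (Fc : ℂ))
            + (1 + (ω - ω^2)) * (((1 + -ω)^m)^3 * (Fc : ℂ))) := by
          rw [key _ hz2, key _ hz1, key _ hz0]
      _ = (1/3) * ((1 - (ω - ω^2)) * ((1 + -ω^2)^m)^3 + ((1 + -1)^m)^3
            + (1 + (ω - ω^2)) * ((1 + -ω)^m)^3) * (Fc : ℂ) := by ring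
  -- pass to the integers
  rw [hNcard _ _, hNcard _ _, hMcard _ _, hMcard _ _, hFcard]
  exact_mod_cast hC

end Stmt13Aux

/-- `3^{|E|} (N₁ − N₂) = (M₁ − M₂) F(G;4)` where `N₁, N₂` count triples of subsets of `E`
with `A △ B`, `B △ C` eulerian and `(|A|+|B|+|C|) mod 6` in `{0,1,2}` resp. `{3,4,5}`,
`M₁, M₂` count arbitrary triples of subsets of `E` with the same conditions, and
`F(G;4)` is the number of ordered pairs of eulerian subsets with union `E`. -/
theorem stmt_13 {V : Type*} [Fintype V] [DecidableEq V] (G : SimpleGraph V)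
    [DecidableRel G.Adj] :
    3 ^ G.edgeFinset.card *
      ((Nat.card {p : Finset (Sym2 V) × Finset (Sym2 V) × Finset (Sym2 V) //
          p.1 ⊆ G.edgeFinset ∧ p.2.1 ⊆ G.edgeFinset ∧ p.2.2 ⊆ G.edgeFinset ∧
            IsEul (symmDiff p.1 p.2.1) ∧ IsEul (symmDiff p.2.1 p.2.2) ∧
            (p.1.card + p.2.1.card + p.2.2.card) % 6 ∈ ({0, 1, 2} : Set ℕ)} : ℤ) -
        (Nat.card {p : Finset (Sym2 V) × Finset (Sym2 V) × Finset (Sym2 V) //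
          p.1 ⊆ G.edgeFinset ∧ p.2.1 ⊆ G.edgeFinset ∧ p.2.2 ⊆ G.edgeFinset ∧
            IsEul (symmDiff p.1 p.2.1) ∧ IsEul (symmDiff p.2.1 p.2.2) ∧
            (p.1.card + p.2.1.card + p.2.2.card) % 6 ∈ ({3, 4, 5} : Set ℕ)} : ℤ)) =
      ((Nat.card {p : Finset (Sym2 V) × Finset (Sym2 V) × Finset (Sym2 V) //
          p.1 ⊆ G.edgeFinset ∧ p.2.1 ⊆ G.edgeFinset ∧ p.2.2 ⊆ G.edgeFinset ∧
            (p.1.card + p.2.1.card + p.2.2.card) % 6 ∈ ({0, 1, 2} : Set ℕ)} : ℤ) -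
        (Nat.card {p : Finset (Sym2 V) × Finset (Sym2 V) × Finset (Sym2 V) //
          p.1 ⊆ G.edgeFinset ∧ p.2.1 ⊆ G.edgeFinset ∧ p.2.2 ⊆ G.edgeFinset ∧
            (p.1.card + p.2.1.card + p.2.2.card) % 6 ∈ ({3, 4, 5} : Set ℕ)} : ℤ)) *
        (Nat.card {p : Finset (Sym2 V) × Finset (Sym2 V) //
          IsEul p.1 ∧ IsEul p.2 ∧ p.1 ∪ p.2 = G.edgeFinset} : ℤ) := by
  exact Stmt13Aux.main G.edgeFinset IsEul
end

section
/- Let G be a finite simple graph with edge set E. Then G has a proper vertex 4-colouring if and only if there exists a partition of E into three (possibly empty) sets X, Y, Z such that ∑ (−1)^{|A| + |B| + |C|} ≠ 0, where the sum is over all triples (A,B,C) with A ⊆ X, B ⊆ Y, C ⊆ Z such that A ∪ C and C ∪ B are both eulerian. -/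
open Finset

section Helpers

variable {V : Type*} [Fintype V] [DecidableEq V]

/-- sign character of a vertex set on an edge -/
def chi (T : Finset V) (e : Sym2 V) : ℤ := (-1) ^ (T.filter (· ∈ e)).card

lemma chi_eq_one_or (T : Finset V) (e : Sym2 V) : chi T e = 1 ∨ chi T e = -1 := by
  rcases Nat.even_or_odd (T.filter (· ∈ e)).card with h | h
  · exact Or.inl (h.neg_one_pow)
  · exact Or.inr (h.neg_one_pow)

lemma chi_ne_zero (T : Finset V) (e : Sym2 V) : chi T e ≠ 0 := by
  rcases chi_eq_one_or T e with h | h <;> rw [h] <;> norm_num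

/-- degree of `v` in edge set `D` -/
def degF (D : Finset (Sym2 V)) (v : V) : ℕ := (D.filter (fun e => v ∈ e)).card

lemma isEul_iff (D : Finset (Sym2 V)) : IsEul D ↔ ∀ v, Even (degF D v) := by
  unfold IsEul degF
  refine forall_congr' fun v => ?_
  have h : Nat.card {e : Sym2 V // e ∈ D ∧ v ∈ e} = (D.filter (fun e => v ∈ e)).card := by
    rw [Nat.card_eq_fintype_card, Fintype.card_subtype]
    congr 1
    ext e
    simp
  rw [h]

lemma prod_chi (T : Finset V) (D : Finset (Sym2 V)) :
    ∏ e ∈ D, chi T e = ∏ v ∈ T, (-1 : ℤ) ^ degF D v := by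
  unfold chi degF
  rw [Finset.prod_pow_eq_pow_sum, Finset.prod_pow_eq_pow_sum]
  congr 1
  simp only [card_filter]
  exact Finset.sum_comm

open Classical in
lemma sum_chi (D : Finset (Sym2 V)) :
    ∑ T ∈ (univ : Finset V).powerset, ∏ e ∈ D, chi T e
      = if IsEul D then (2 : ℤ) ^ (Fintype.card V) else 0 := by
  classical
  have h1 : ∀ T ∈ (univ : Finset V).powerset, ∏ e ∈ D, chi T e = ∏ v ∈ T, (-1:ℤ) ^ degF D v :=
    fun T _ => prod_chi T D
  rw [Finset.sum_congr rfl h1]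
  have h2 : ∏ v ∈ (univ : Finset V), ((-1:ℤ) ^ degF D v + 1)
      = ∑ T ∈ (univ : Finset V).powerset, (∏ v ∈ T, (-1:ℤ) ^ degF D v) := by
    rw [Finset.prod_add]
    refine Finset.sum_congr rfl fun T _ => by simp
  rw [← h2, isEul_iff]
  by_cases h : ∀ v, Even (degF D v)
  · rw [if_pos h]
    rw [Finset.prod_congr rfl (fun v (_ : v ∈ (univ : Finset V)) => by
      rw [(h v).neg_one_pow]; norm_num : ∀ v ∈ (univ : Finset V), ((-1:ℤ) ^ degF D v + 1) = 2)]
    simp [Finset.card_univ]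
  · rw [if_neg h]
    push_neg at h
    obtain ⟨v, hv⟩ := h
    exact Finset.prod_eq_zero (mem_univ v) (by rw [(Nat.not_even_iff_odd.mp hv).neg_one_pow]; ring)

lemma sum_powerset_neg (S : Finset (Sym2 V)) (w : Sym2 V → ℤ) :
    ∑ A ∈ S.powerset, (-1 : ℤ) ^ A.card * ∏ e ∈ A, w e = ∏ e ∈ S, (1 - w e) := by
  have := Finset.prod_add (fun e => -w e) (fun _ => (1 : ℤ)) S
  simp only [Finset.prod_const_one, mul_one] at this
  calc ∑ A ∈ S.powerset, (-1:ℤ)^A.card * ∏ e ∈ A, w e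
      = ∑ A ∈ S.powerset, ∏ e ∈ A, (-w e) := by
        refine Finset.sum_congr rfl fun A _ => ?_
        have : ∀ e ∈ A, -w e = (-1 : ℤ) * w e := fun e _ => by ring
        rw [Finset.prod_congr rfl this, Finset.prod_mul_distrib, Finset.prod_const]
    _ = ∏ e ∈ S, (-w e + 1) := this.symm
    _ = ∏ e ∈ S, (1 - w e) := by refine Finset.prod_congr rfl fun e _ => by ring

lemma sum_comm3 {α β γ M : Type*} [AddCommMonoid M] (s : Finset α) (t : Finset β)
    (u : Finset γ) (w : α → β → γ → M) :
    ∑ a ∈ s, ∑ b ∈ t, ∑ c ∈ u, w a b c = ∑ c ∈ u, ∑ a ∈ s, ∑ b ∈ t, w a b c :=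
  calc ∑ a ∈ s, ∑ b ∈ t, ∑ c ∈ u, w a b c
      = ∑ a ∈ s, ∑ c ∈ u, ∑ b ∈ t, w a b c :=
        Finset.sum_congr rfl fun a _ => Finset.sum_comm
    _ = ∑ c ∈ u, ∑ a ∈ s, ∑ b ∈ t, w a b c := Finset.sum_comm

open Classical in
lemma main_eq (X Y Z : Finset (Sym2 V)) (hXZ : Disjoint X Z) (hYZ : Disjoint Y Z) :
    ((2:ℤ) ^ (Fintype.card V) * 2 ^ (Fintype.card V)) *
      (∑ A ∈ X.powerset, ∑ B ∈ Y.powerset, ∑ C ∈ Z.powerset,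
        (if IsEul (A ∪ C) ∧ IsEul (C ∪ B) then (-1:ℤ) ^ (A.card + B.card + C.card) else 0))
    = ∑ T ∈ (univ : Finset V).powerset, ∑ U ∈ (univ : Finset V).powerset,
        (∏ e ∈ X, (1 - chi T e)) *
          ((∏ e ∈ Y, (1 - chi U e)) * (∏ e ∈ Z, (1 - chi T e * chi U e))) := by
  set n := Fintype.card V with hn
  set P := (univ : Finset V).powerset with hP
  set f : Finset (Sym2 V) → Finset V → ℤ :=
    fun A T => (-1:ℤ) ^ A.card * ∏ e ∈ A, chi T e with hf
  set h : Finset (Sym2 V) → Finset V → Finset V → ℤ :=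
    fun C T U => (-1:ℤ) ^ C.card * ∏ e ∈ C, (chi T e * chi U e) with hh
  have key : ∀ A ∈ X.powerset, ∀ B ∈ Y.powerset, ∀ C ∈ Z.powerset,
      ∑ T ∈ P, ∑ U ∈ P, f A T * (f B U * h C T U)
        = (2^n * 2^n : ℤ) *
          (if IsEul (A ∪ C) ∧ IsEul (C ∪ B) then (-1:ℤ) ^ (A.card + B.card + C.card) else 0) := by
    intro A hA B hB C hC
    rw [Finset.mem_powerset] at hA hB hC
    have hAC : Disjoint A C := hXZ.mono hA hC
    have hCB : Disjoint C B := (hYZ.mono hB hC).symm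
    have step : ∀ T U : Finset V, f A T * (f B U * h C T U)
        = (-1:ℤ) ^ (A.card + B.card + C.card) *
          ((∏ e ∈ A ∪ C, chi T e) * (∏ e ∈ C ∪ B, chi U e)) := by
      intro T U
      rw [hf, hh]
      simp only [Finset.prod_union hAC, Finset.prod_union hCB, Finset.prod_mul_distrib]
      rw [pow_add, pow_add]
      ring
    calc ∑ T ∈ P, ∑ U ∈ P, f A T * (f B U * h C T U)
        = ∑ T ∈ P, ∑ U ∈ P, (-1:ℤ) ^ (A.card + B.card + C.card) *
            ((∏ e ∈ A ∪ C, chi T e) * (∏ e ∈ C ∪ B, chi U e)) := by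
          exact Finset.sum_congr rfl fun T _ => Finset.sum_congr rfl fun U _ => step T U
      _ = (-1:ℤ) ^ (A.card + B.card + C.card) *
            ((∑ T ∈ P, ∏ e ∈ A ∪ C, chi T e) * (∑ U ∈ P, ∏ e ∈ C ∪ B, chi U e)) := by
          rw [Finset.sum_mul_sum, Finset.mul_sum]
          exact Finset.sum_congr rfl fun T _ => by rw [Finset.mul_sum]
      _ = (2^n * 2^n : ℤ) *
          (if IsEul (A ∪ C) ∧ IsEul (C ∪ B) then (-1:ℤ) ^ (A.card + B.card + C.card) else 0) := by
          rw [hP, sum_chi, sum_chi, ← hn]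
          by_cases h1 : IsEul (A ∪ C) <;> by_cases h2 : IsEul (C ∪ B) <;>
            simp [h1, h2] <;> ring
  have expand : ∀ T U : Finset V,
      (∏ e ∈ X, (1 - chi T e)) *
          ((∏ e ∈ Y, (1 - chi U e)) * (∏ e ∈ Z, (1 - chi T e * chi U e)))
        = ∑ A ∈ X.powerset, ∑ B ∈ Y.powerset, ∑ C ∈ Z.powerset, f A T * (f B U * h C T U) := by
    intro T U
    rw [← sum_powerset_neg X (chi T), ← sum_powerset_neg Y (chi U),
      ← sum_powerset_neg Z (fun e => chi T e * chi U e)]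
    rw [Finset.sum_mul]
    refine Finset.sum_congr rfl fun A _ => ?_
    rw [Finset.sum_mul_sum, Finset.mul_sum]
    refine Finset.sum_congr rfl fun B _ => ?_
    rw [Finset.mul_sum]
  calc ((2:ℤ)^n * 2^n) *
      (∑ A ∈ X.powerset, ∑ B ∈ Y.powerset, ∑ C ∈ Z.powerset,
        (if IsEul (A ∪ C) ∧ IsEul (C ∪ B) then (-1:ℤ) ^ (A.card + B.card + C.card) else 0))
      = ∑ A ∈ X.powerset, ∑ B ∈ Y.powerset, ∑ C ∈ Z.powerset,
          ∑ T ∈ P, ∑ U ∈ P, f A T * (f B U * h C T U) := by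
        rw [Finset.mul_sum]
        refine Finset.sum_congr rfl fun A hA => ?_
        rw [Finset.mul_sum]
        refine Finset.sum_congr rfl fun B hB => ?_
        rw [Finset.mul_sum]
        refine Finset.sum_congr rfl fun C hC => ?_
        exact (key A hA B hB C hC).symm
    _ = ∑ T ∈ P, ∑ U ∈ P, ∑ A ∈ X.powerset, ∑ B ∈ Y.powerset, ∑ C ∈ Z.powerset,
          f A T * (f B U * h C T U) := by
        rw [sum_comm3 P P X.powerset
          (fun T U A => ∑ B ∈ Y.powerset, ∑ C ∈ Z.powerset, f A T * (f B U * h C T U))]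
        refine Finset.sum_congr rfl fun A _ => ?_
        rw [sum_comm3 P P Y.powerset
          (fun T U B => ∑ C ∈ Z.powerset, f A T * (f B U * h C T U))]
        refine Finset.sum_congr rfl fun B _ => ?_
        rw [sum_comm3 P P Z.powerset (fun T U C => f A T * (f B U * h C T U))]
    _ = ∑ T ∈ P, ∑ U ∈ P,
        (∏ e ∈ X, (1 - chi T e)) *
          ((∏ e ∈ Y, (1 - chi U e)) * (∏ e ∈ Z, (1 - chi T e * chi U e))) := by
        exact Finset.sum_congr rfl fun T _ => Finset.sum_congr rfl fun U _ => (expand T U).symm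

lemma one_sub_nonneg {x : ℤ} (hx : x = 1 ∨ x = -1) : 0 ≤ 1 - x := by
  rcases hx with rfl | rfl <;> norm_num

lemma one_sub_ne_zero_iff {x : ℤ} (hx : x = 1 ∨ x = -1) : 1 - x ≠ 0 ↔ x = -1 := by
  rcases hx with rfl | rfl <;> norm_num

lemma chi_mul_eq_one_or (T U : Finset V) (e : Sym2 V) :
    chi T e * chi U e = 1 ∨ chi T e * chi U e = -1 := by
  rcases chi_eq_one_or T e with h1 | h1 <;> rcases chi_eq_one_or U e with h2 | h2 <;>
    rw [h1, h2] <;> norm_num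

/-- the weight of a pair of vertex sets -/
def W (X Y Z : Finset (Sym2 V)) (T U : Finset V) : ℤ :=
  (∏ e ∈ X, (1 - chi T e)) *
    ((∏ e ∈ Y, (1 - chi U e)) * (∏ e ∈ Z, (1 - chi T e * chi U e)))

lemma W_nonneg (X Y Z : Finset (Sym2 V)) (T U : Finset V) : 0 ≤ W X Y Z T U := by
  unfold W
  refine mul_nonneg (Finset.prod_nonneg fun e _ => one_sub_nonneg (chi_eq_one_or T e))
    (mul_nonneg (Finset.prod_nonneg fun e _ => one_sub_nonneg (chi_eq_one_or U e))
      (Finset.prod_nonneg fun e _ => one_sub_nonneg (chi_mul_eq_one_or T U e)))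

lemma W_ne_zero_iff (X Y Z : Finset (Sym2 V)) (T U : Finset V) :
    W X Y Z T U ≠ 0 ↔
      (∀ e ∈ X, chi T e = -1) ∧ (∀ e ∈ Y, chi U e = -1) ∧
        (∀ e ∈ Z, chi T e * chi U e = -1) := by
  unfold W
  rw [mul_ne_zero_iff, mul_ne_zero_iff, Finset.prod_ne_zero_iff, Finset.prod_ne_zero_iff,
    Finset.prod_ne_zero_iff]
  refine and_congr (forall₂_congr fun e _ => one_sub_ne_zero_iff (chi_eq_one_or T e))
    (and_congr (forall₂_congr fun e _ => one_sub_ne_zero_iff (chi_eq_one_or U e))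
      (forall₂_congr fun e _ => one_sub_ne_zero_iff (chi_mul_eq_one_or T U e)))

open Classical in
lemma sum_ne_zero_iff (X Y Z : Finset (Sym2 V)) (hXZ : Disjoint X Z) (hYZ : Disjoint Y Z) :
    (∑ A ∈ X.powerset, ∑ B ∈ Y.powerset, ∑ C ∈ Z.powerset,
        (if IsEul (A ∪ C) ∧ IsEul (C ∪ B) then (-1:ℤ) ^ (A.card + B.card + C.card) else 0)) ≠ 0
      ↔ ∃ T U : Finset V, (∀ e ∈ X, chi T e = -1) ∧ (∀ e ∈ Y, chi U e = -1) ∧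
          (∀ e ∈ Z, chi T e * chi U e = -1) := by
  set P := (univ : Finset V).powerset with hP
  set S := (∑ A ∈ X.powerset, ∑ B ∈ Y.powerset, ∑ C ∈ Z.powerset,
        (if IsEul (A ∪ C) ∧ IsEul (C ∪ B) then (-1:ℤ) ^ (A.card + B.card + C.card) else 0)) with hS
  have hpow : ((2:ℤ) ^ (Fintype.card V) * 2 ^ (Fintype.card V)) ≠ 0 := by positivity
  have key0 := main_eq X Y Z hXZ hYZ
  rw [← hS] at key0
  have key : ((2:ℤ) ^ (Fintype.card V) * 2 ^ (Fintype.card V)) * S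
      = ∑ T ∈ P, ∑ U ∈ P, W X Y Z T U := key0
  constructor
  · intro hne
    have h2 : ∑ T ∈ P, ∑ U ∈ P, W X Y Z T U ≠ 0 := by
      rw [← key]
      exact mul_ne_zero hpow hne
    have h3 : ¬ ∀ T ∈ P, ∑ U ∈ P, W X Y Z T U = 0 := by
      intro hall
      exact h2 (Finset.sum_eq_zero hall)
    push_neg at h3
    obtain ⟨T, _, hT⟩ := h3
    have h4 : ¬ ∀ U ∈ P, W X Y Z T U = 0 := by
      intro hall
      exact hT (Finset.sum_eq_zero hall)
    push_neg at h4
    obtain ⟨U, _, hU⟩ := h4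
    exact ⟨T, U, (W_ne_zero_iff X Y Z T U).1 hU⟩
  · rintro ⟨T, U, hcond⟩
    have hW : W X Y Z T U ≠ 0 := (W_ne_zero_iff X Y Z T U).2 hcond
    intro hS0
    rw [hS0, mul_zero] at key
    have h1 : ∀ T' ∈ P, ∑ U' ∈ P, W X Y Z T' U' = 0 :=
      (Finset.sum_eq_zero_iff_of_nonneg fun T' _ =>
        Finset.sum_nonneg fun U' _ => W_nonneg X Y Z T' U').1 key.symm
    have h2 : ∀ U' ∈ P, W X Y Z T U' = 0 :=
      (Finset.sum_eq_zero_iff_of_nonneg fun U' _ => W_nonneg X Y Z T U').1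
        (h1 T (Finset.mem_powerset.2 (Finset.subset_univ T)))
    exact hW (h2 U (Finset.mem_powerset.2 (Finset.subset_univ U)))

lemma chi_edge (T : Finset V) {u v : V} (huv : u ≠ v) :
    chi T s(u,v) = if (u ∈ T ↔ v ∈ T) then 1 else -1 := by
  unfold chi
  have hfil : T.filter (· ∈ s(u,v)) = T ∩ {u, v} := by
    ext x
    simp [Sym2.mem_iff]
  rw [hfil]
  by_cases hu : u ∈ T <;> by_cases hv : v ∈ T
  · have : T ∩ {u, v} = {u, v} := by
      ext x
      simp only [Finset.mem_inter, Finset.mem_insert, Finset.mem_singleton]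
      constructor
      · tauto
      · rintro (rfl | rfl) <;> simp [hu, hv]
    rw [this, Finset.card_pair huv]
    simp [hu, hv]
  · have : T ∩ {u, v} = {u} := by
      ext x
      simp only [Finset.mem_inter, Finset.mem_insert, Finset.mem_singleton]
      constructor
      · rintro ⟨hx, rfl | rfl⟩ <;> tauto
      · rintro rfl; simp [hu]
    rw [this, Finset.card_singleton]
    simp [hu, hv]
  · have : T ∩ {u, v} = {v} := by
      ext x
      simp only [Finset.mem_inter, Finset.mem_insert, Finset.mem_singleton]
      constructor
      · rintro ⟨hx, rfl | rfl⟩ <;> tauto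
      · rintro rfl; simp [hv]
    rw [this, Finset.card_singleton]
    simp [hu, hv]
  · have : T ∩ {u, v} = ∅ := by
      ext x
      simp only [Finset.mem_inter, Finset.mem_insert, Finset.mem_singleton]
      constructor
      · rintro ⟨hx, rfl | rfl⟩ <;> tauto
      · simp
    rw [this, Finset.card_empty]
    simp [hu, hv]

lemma chi_edge_neg_one (T : Finset V) {u v : V} (huv : u ≠ v) :
    chi T s(u,v) = -1 ↔ ¬(u ∈ T ↔ v ∈ T) := by
  rw [chi_edge T huv]
  by_cases h : (u ∈ T ↔ v ∈ T) <;> simp [h]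

end Helpers



/- `G` has a proper vertex 4-colouring iff there is a partition of `E` into three
(possibly empty) parts `X, Y, Z` with
`∑_{A ⊆ X, B ⊆ Y, C ⊆ Z, A ∪ C and C ∪ B eulerian} (−1)^{|A|+|B|+|C|} ≠ 0`. -/
open Classical in
theorem stmt_14 {V : Type*} [Fintype V] [DecidableEq V] (G : SimpleGraph V)
    [DecidableRel G.Adj] :
    (∃ c : V → Fin 4, ∀ u v : V, G.Adj u v → c u ≠ c v) ↔
      ∃ X Y Z : Finset (Sym2 V), X ∪ Y ∪ Z = G.edgeFinset ∧
        Disjoint X Y ∧ Disjoint X Z ∧ Disjoint Y Z ∧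
        (∑ A ∈ X.powerset, ∑ B ∈ Y.powerset, ∑ C ∈ Z.powerset,
          (if IsEul (A ∪ C) ∧ IsEul (C ∪ B) then
            (-1 : ℤ) ^ (A.card + B.card + C.card) else 0)) ≠ 0 := by
  constructor
  · rintro ⟨c, hc⟩
    set T := (univ : Finset V).filter (fun v => c v = 0 ∨ c v = 1) with hT
    set U := (univ : Finset V).filter (fun v => c v = 0 ∨ c v = 2) with hU
    have hmemT : ∀ w, w ∈ T ↔ (c w = 0 ∨ c w = 1) := fun w => by simp [hT]
    have hmemU : ∀ w, w ∈ U ↔ (c w = 0 ∨ c w = 2) := fun w => by simp [hU]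
    have hsplit : ∀ u v : V, G.Adj u v → ¬(u ∈ T ↔ v ∈ T) ∨ ¬(u ∈ U ↔ v ∈ U) := by
      intro u v huv
      have hne := hc u v huv
      rw [hmemT u, hmemT v, hmemU u, hmemU v]
      have key : ∀ a b : Fin 4, a ≠ b →
          (¬((a = 0 ∨ a = 1) ↔ (b = 0 ∨ b = 1)) ∨ ¬((a = 0 ∨ a = 2) ↔ (b = 0 ∨ b = 2))) := by
        decide
      exact key _ _ hne
    have hchi : ∀ u v : V, G.Adj u v → (chi T s(u,v) = -1 ∨ chi U s(u,v) = -1) := by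
      intro u v huv
      rcases hsplit u v huv with h | h
      · exact Or.inl ((chi_edge_neg_one T (G.ne_of_adj huv)).2 h)
      · exact Or.inr ((chi_edge_neg_one U (G.ne_of_adj huv)).2 h)
    set X := G.edgeFinset.filter (fun e => chi T e = -1 ∧ chi U e = -1) with hXdef
    set Y := G.edgeFinset.filter (fun e => chi U e = -1 ∧ chi T e = 1) with hYdef
    set Z := G.edgeFinset.filter (fun e => chi T e = -1 ∧ chi U e = 1) with hZdef
    have hXZ : Disjoint X Z := by
      rw [Finset.disjoint_left]
      intro e heX heZ
      rw [hXdef, Finset.mem_filter] at heX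
      rw [hZdef, Finset.mem_filter] at heZ
      have h1 := heX.2.2
      have h2 := heZ.2.2
      rw [h1] at h2
      norm_num at h2
    have hXY : Disjoint X Y := by
      rw [Finset.disjoint_left]
      intro e heX heY
      rw [hXdef, Finset.mem_filter] at heX
      rw [hYdef, Finset.mem_filter] at heY
      have h1 := heX.2.1
      have h2 := heY.2.2
      rw [h1] at h2
      norm_num at h2
    have hYZ : Disjoint Y Z := by
      rw [Finset.disjoint_left]
      intro e heY heZ
      rw [hYdef, Finset.mem_filter] at heY
      rw [hZdef, Finset.mem_filter] at heZ
      have h1 := heY.2.2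
      have h2 := heZ.2.1
      rw [h2] at h1
      norm_num at h1
    refine ⟨X, Y, Z, ?_, hXY, hXZ, hYZ, ?_⟩
    · ext e
      induction e using Sym2.ind with
      | _ u v =>
        simp only [Finset.mem_union, hXdef, hYdef, hZdef, Finset.mem_filter]
        constructor
        · tauto
        · intro he
          have hadj : G.Adj u v := by rwa [SimpleGraph.mem_edgeFinset, SimpleGraph.mem_edgeSet] at he
          have h1 := hchi u v hadj
          rcases chi_eq_one_or T s(u,v) with hT1 | hT1 <;>
            rcases chi_eq_one_or U s(u,v) with hU1 | hU1 <;> tauto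
    · rw [sum_ne_zero_iff X Y Z hXZ hYZ]
      refine ⟨T, U, ?_, ?_, ?_⟩
      · intro e heX
        rw [hXdef, Finset.mem_filter] at heX
        exact heX.2.1
      · intro e heY
        rw [hYdef, Finset.mem_filter] at heY
        exact heY.2.1
      · intro e heZ
        rw [hZdef, Finset.mem_filter] at heZ
        rw [heZ.2.1, heZ.2.2]
        norm_num
  · rintro ⟨X, Y, Z, hun, hXY, hXZ, hYZ, hsum⟩
    rw [sum_ne_zero_iff X Y Z hXZ hYZ] at hsum
    obtain ⟨T, U, h1, h2, h3⟩ := hsum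
    refine ⟨fun v => ⟨(if v ∈ T then 2 else 0) + (if v ∈ U then 1 else 0),
      by split_ifs <;> omega⟩, ?_⟩
    intro u v huv hcc
    have hne := G.ne_of_adj huv
    have hb : (u ∈ T ↔ v ∈ T) ∧ (u ∈ U ↔ v ∈ U) := by
      simp only [Fin.mk.injEq] at hcc
      by_cases hu1 : u ∈ T <;> by_cases hv1 : v ∈ T <;> by_cases hu2 : u ∈ U <;>
        by_cases hv2 : v ∈ U <;> simp [hu1, hv1, hu2, hv2] at hcc ⊢
    have he : s(u,v) ∈ X ∪ Y ∪ Z := by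
      rw [hun]
      exact SimpleGraph.mem_edgeFinset.2 huv
    rcases Finset.mem_union.1 he with he' | heZ
    · rcases Finset.mem_union.1 he' with heX | heY
      · exact (chi_edge_neg_one T hne).1 (h1 _ heX) hb.1
      · exact (chi_edge_neg_one U hne).1 (h2 _ heY) hb.2
    · have hz := h3 _ heZ
      rw [chi_edge T hne, chi_edge U hne, if_pos hb.1, if_pos hb.2] at hz
      norm_num at hz
end

section
/- Let q ≥ 1, let I be a finite set, let C be a ℤ/qℤ-submodule of (ℤ/qℤ)^I, and let C^⊥ = {y ∈ (ℤ/qℤ)^I : ∑_{i∈I} x_i y_i = 0 for all x ∈ C}. For every y ∈ (ℤ/qℤ)^I with y_i ≠ 0 for all i ∈ I, one has |C^⊥| · ∑_{x ∈ C, x ≤ y} (−1)^{|y| − |x|} = ∑_{x ∈ C^⊥} ∏_{i ∈ I} (χ(x_i y_i) − 1), where χ(k) = e^{2πi k̃ / q} for any integer representative k̃ of k ∈ ℤ/qℤ. -/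
/- For `q ≥ 1`, a `ℤ/qℤ`-submodule `C` of `(ℤ/qℤ)^I` and `y` with all coordinates
nonzero: `|C^⊥| ∑_{x ∈ C, x ≤ y} (−1)^{|y|−|x|} = ∑_{x ∈ C^⊥} ∏_i (χ(x_i y_i) − 1)`,
where `χ(k) = exp(2πi k̃/q)` and `x ≤ y` means `x_i ∈ {0, y_i}` for all `i`. -/
open Finset

lemma addchar_sum {A M : Type*} [AddCommMonoid A] [CommMonoid M] (ψ : AddChar A M)
    {ι : Type*} (s : Finset ι) (g : ι → A) : ψ (∑ i ∈ s, g i) = ∏ i ∈ s, ψ (g i) := by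
  induction s using Finset.cons_induction with
  | empty => simp
  | cons a s ha ih => rw [Finset.sum_cons, Finset.prod_cons, AddChar.map_add_eq_mul, ih]

lemma aux_char_surj (q : ℕ) [NeZero q] {c : ℂ} (hc : c ^ q = 1) :
    ∃ m : ZMod q, ZMod.stdAddChar m = c := by
  obtain ⟨i, hi, rfl⟩ := (Complex.isPrimitiveRoot_exp q (NeZero.ne q)).eq_pow_of_pow_eq_one hc
  refine ⟨(i : ZMod q), ?_⟩
  have h := ZMod.stdAddChar_coe (N := q) (i : ℤ)
  rw [Int.cast_natCast] at h
  rw [h, ← Complex.exp_nat_mul]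
  congr 1
  push_cast
  ring

lemma aux_dual {I : Type*} [Fintype I] [DecidableEq I] (q : ℕ) [NeZero q]
    (C : Submodule (ZMod q) (I → ZMod q)) {u : I → ZMod q} (hu : u ∉ C) :
    ∃ w : I → ZMod q, (∀ z ∈ C, ∑ i, z i * w i = 0) ∧ ∑ i, w i * u i ≠ 0 := by
  classical
  have hfin : Finite ((I → ZMod q) ⧸ C) := Quotient.finite _
  obtain ⟨φ, hφ⟩ := CommGroup.exists_apply_ne_one_of_hasEnoughRootsOfUnity
      (G := Multiplicative ((I → ZMod q) ⧸ C)) (M := ℂ)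
      (a := Multiplicative.ofAdd (C.mkQ u))
      (by
        simp only [ne_eq, ofAdd_eq_one]
        rw [Submodule.mkQ_apply, Submodule.Quotient.mk_eq_zero]
        exact hu)
  set F : Multiplicative (I → ZMod q) →* ℂˣ :=
    φ.comp (AddMonoidHom.toMultiplicative C.mkQ.toAddMonoidHom) with hF
  set f : (I → ZMod q) → ℂˣ := fun x => F (Multiplicative.ofAdd x) with hf
  have hfeq : ∀ x : I → ZMod q, f x = φ (Multiplicative.ofAdd (C.mkQ x)) := fun x => rfl
  have hfadd : ∀ a b, f (a + b) = f a * f b := by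
    intro a b
    simp only [hf]
    rw [← map_mul, ← ofAdd_add]
  have hfsum : ∀ {ι : Type _} (s : Finset ι) (g : ι → (I → ZMod q)),
      f (∑ i ∈ s, g i) = ∏ i ∈ s, f (g i) := by
    intro ι s g
    induction s using Finset.cons_induction with
    | empty => simp [hf]
    | cons a s ha ih => rw [Finset.sum_cons, Finset.prod_cons, hfadd, ih]
  have hfnsmul : ∀ (n : ℕ) (a : I → ZMod q), f (n • a) = f a ^ n := by
    intro n a
    simp only [hf, ofAdd_nsmul, map_pow]
  have hfC : ∀ z ∈ C, f z = 1 := by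
    intro z hz
    rw [hfeq]
    have h0 : C.mkQ z = 0 := by rw [Submodule.mkQ_apply, Submodule.Quotient.mk_eq_zero]; exact hz
    rw [h0, ofAdd_zero, map_one]
  have hroot : ∀ i : I, ((f (Pi.single i 1) : ℂ)) ^ q = 1 := by
    intro i
    have h0 : q • (Pi.single i 1 : I → ZMod q) = 0 := by
      ext j
      by_cases hji : j = i <;>
        simp [hji, Pi.single_apply, ZMod.natCast_self, nsmul_eq_mul]
    have h2 := hfnsmul q (Pi.single i 1)
    rw [h0, show f 0 = 1 from by simpa using hfadd 0 0] at h2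
    rw [← Units.val_pow_eq_pow_val, ← h2, Units.val_one]
  choose w hw using fun i => aux_char_surj q (hroot i)
  have key : ∀ x : I → ZMod q, ZMod.stdAddChar (∑ i, w i * x i) = (f x : ℂ) := by
    intro x
    have lhs : ZMod.stdAddChar (∑ i, w i * x i)
        = ∏ i, (ZMod.stdAddChar (w i)) ^ (x i).val := by
      rw [addchar_sum]
      refine Finset.prod_congr rfl fun i _ => ?_
      rw [← AddChar.map_nsmul_eq_pow]
      congr 1
      rw [nsmul_eq_mul, ZMod.natCast_val, ZMod.cast_id, mul_comm]
    have hsing : ∀ i, Pi.single i (x i) = (x i).val • (Pi.single i 1 : I → ZMod q) := by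
      intro i
      ext j
      by_cases hji : j = i <;>
        simp [hji, Pi.single_apply, nsmul_eq_mul, ZMod.natCast_val, ZMod.cast_id]
    have rhs : (f x : ℂ) = ∏ i, (ZMod.stdAddChar (w i)) ^ (x i).val := by
      conv_lhs => rw [show x = ∑ i, Pi.single i (x i) from (Finset.univ_sum_single x).symm]
      rw [hfsum]
      rw [show ((∏ i, f (Pi.single i (x i)) : ℂˣ) : ℂ) = ∏ i, ((f (Pi.single i (x i)) : ℂˣ) : ℂ)
        from map_prod (Units.coeHom ℂ) _ _]
      refine Finset.prod_congr rfl fun i _ => ?_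
      rw [hsing i, hfnsmul, Units.val_pow_eq_pow_val, hw i]
    rw [lhs, rhs]
  refine ⟨w, fun z hz => ?_, fun hzero => ?_⟩
  · have h1 : ZMod.stdAddChar (∑ i, w i * z i) = 1 := by
      rw [key z, hfC z hz, Units.val_one]
    have h2 : (∑ i, w i * z i) = 0 := by
      apply ZMod.injective_stdAddChar (N := q)
      rw [h1, AddChar.map_zero_eq_one]
    rw [← h2]
    exact Finset.sum_congr rfl fun i _ => mul_comm _ _
  · have h1 : (f u : ℂ) = 1 := by rw [← key u, hzero, AddChar.map_zero_eq_one]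
    have hfu1 : f u = 1 := Units.ext (by rw [h1, Units.val_one])
    rw [hfeq] at hfu1
    exact hφ hfu1

lemma aux_char_val (q : ℕ) [NeZero q] (j : ZMod q) :
    Complex.exp (2 * Real.pi * Complex.I * (j.val : ℂ) / q) = ZMod.stdAddChar j := by
  rw [ZMod.stdAddChar_apply, ZMod.toCircle_apply]


open Classical in
theorem stmt_15 {I : Type*} [Fintype I] [DecidableEq I] (q : ℕ) [NeZero q] (hq : 1 ≤ q)
    (C : Submodule (ZMod q) (I → ZMod q)) (y : I → ZMod q) (hy : ∀ i, y i ≠ 0) :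
    ((Finset.univ.filter
        (fun x : I → ZMod q => ∀ z ∈ C, ∑ i : I, z i * x i = 0)).card : ℂ) *
      ∑ x ∈ Finset.univ.filter
          (fun x : I → ZMod q => x ∈ C ∧ ∀ i : I, x i = 0 ∨ x i = y i),
        (-1 : ℂ) ^ (Nat.card {i : I // y i ≠ 0} - Nat.card {i : I // x i ≠ 0}) =
    ∑ x ∈ Finset.univ.filter
        (fun x : I → ZMod q => ∀ z ∈ C, ∑ i : I, z i * x i = 0),
      ∏ i : I,
        (Complex.exp (2 * Real.pi * Complex.I * ((x i * y i).val : ℂ) / q) - 1) := by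
  classical
  set n := Fintype.card I with hn
  set u : Finset I → (I → ZMod q) := fun S i => if i ∈ S then y i else 0 with hu
  set D : Finset (I → ZMod q) :=
    Finset.univ.filter (fun x : I → ZMod q => ∀ z ∈ C, ∑ i : I, z i * x i = 0) with hD
  -- orthogonality
  have horth : ∀ v : I → ZMod q,
      (∑ x ∈ D, ZMod.stdAddChar (∑ i, x i * v i))
        = if v ∈ C then (D.card : ℂ) else 0 := by
    intro v
    by_cases hv : v ∈ C
    · rw [if_pos hv]
      rw [Finset.sum_congr rfl fun x hx => ?_, Finset.sum_const, nsmul_eq_mul, mul_one]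
      have hmem := (Finset.mem_filter.mp hx).2 v hv
      have h0 : ∑ i, x i * v i = 0 := by
        rw [← hmem]; exact Finset.sum_congr rfl fun i _ => mul_comm _ _
      rw [h0, AddChar.map_zero_eq_one]
    · rw [if_neg hv]
      obtain ⟨w, hw1, hw2⟩ := aux_dual q C hv
      have hwD : w ∈ D := Finset.mem_filter.mpr ⟨Finset.mem_univ _, hw1⟩
      have hshift : ∑ x ∈ D, ZMod.stdAddChar (∑ i, x i * v i)
          = ∑ x ∈ D, ZMod.stdAddChar (∑ i, w i * v i) * ZMod.stdAddChar (∑ i, x i * v i) := by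
        refine Finset.sum_nbij' (fun x => x - w) (fun x => w + x) ?_ ?_ ?_ ?_ ?_
        · intro a ha
          refine Finset.mem_filter.mpr ⟨Finset.mem_univ _, fun z hz => ?_⟩
          have h1 := (Finset.mem_filter.mp ha).2 z hz
          have h2 := hw1 z hz
          calc ∑ i, z i * (a - w) i = (∑ i, z i * a i) - ∑ i, z i * w i := by
                rw [← Finset.sum_sub_distrib]
                exact Finset.sum_congr rfl fun i _ => by simp [mul_sub]
            _ = 0 := by rw [h1, h2, sub_zero]
        · intro a ha
          refine Finset.mem_filter.mpr ⟨Finset.mem_univ _, fun z hz => ?_⟩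
          have h1 := (Finset.mem_filter.mp ha).2 z hz
          have h2 := hw1 z hz
          calc ∑ i, z i * (w + a) i = (∑ i, z i * w i) + ∑ i, z i * a i := by
                rw [← Finset.sum_add_distrib]
                exact Finset.sum_congr rfl fun i _ => by simp [mul_add]
            _ = 0 := by rw [h1, h2, add_zero]
        · intro a _; simp
        · intro a _; simp
        · intro a _
          rw [← AddChar.map_add_eq_mul]
          congr 1
          rw [← Finset.sum_add_distrib]
          refine Finset.sum_congr rfl fun i _ => ?_
          simp only [Pi.sub_apply]
          ring
      have hne : ZMod.stdAddChar (∑ i, w i * v i) ≠ 1 := by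
        intro h
        apply hw2
        apply ZMod.injective_stdAddChar (N := q)
        rw [h, AddChar.map_zero_eq_one]
      have hzero : (ZMod.stdAddChar (∑ i, w i * v i) - 1)
          * ∑ x ∈ D, ZMod.stdAddChar (∑ i, x i * v i) = 0 := by
        rw [sub_mul, one_mul, Finset.mul_sum, ← hshift, sub_self]
      rcases mul_eq_zero.mp hzero with h | h
      · exact absurd (sub_eq_zero.mp h) hne
      · exact h
  -- sums over subsets
  have hsumu : ∀ (x : I → ZMod q) (S : Finset I),
      (∑ i, x i * u S i) = ∑ i ∈ S, x i * y i := by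
    intro x S
    rw [show (∑ i, x i * u S i) = ∑ i, (if i ∈ S then x i * y i else 0) from
      Finset.sum_congr rfl fun i _ => by simp [hu, mul_ite]]
    rw [Finset.sum_ite_mem, Finset.univ_inter]
  have hprod : ∀ x : I → ZMod q,
      (∏ i, (ZMod.stdAddChar (x i * y i) - 1))
        = ∑ S ∈ Finset.univ.powerset,
            ZMod.stdAddChar (∑ i, x i * u S i) * (-1 : ℂ) ^ (n - S.card) := by
    intro x
    calc (∏ i, (ZMod.stdAddChar (x i * y i) - 1))
        = ∏ i, (ZMod.stdAddChar (x i * y i) + (-1)) := by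
          exact Finset.prod_congr rfl fun i _ => by rw [sub_eq_add_neg]
      _ = ∑ S ∈ Finset.univ.powerset,
            (∏ i ∈ S, ZMod.stdAddChar (x i * y i)) * ∏ _i ∈ Finset.univ \ S, (-1 : ℂ) :=
          Finset.prod_add _ _ _
      _ = ∑ S ∈ Finset.univ.powerset,
            ZMod.stdAddChar (∑ i, x i * u S i) * (-1 : ℂ) ^ (n - S.card) := by
          refine Finset.sum_congr rfl fun S hS => ?_
          rw [Finset.prod_const, Finset.card_sdiff_of_subset (Finset.subset_univ S), Finset.card_univ,
            hsumu, addchar_sum]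
  -- RHS computation
  have hRHS : (∑ x ∈ D, ∏ i, (ZMod.stdAddChar (x i * y i) - 1))
      = ∑ S ∈ Finset.univ.powerset,
          (-1 : ℂ) ^ (n - S.card) * (if u S ∈ C then (D.card : ℂ) else 0) := by
    calc (∑ x ∈ D, ∏ i, (ZMod.stdAddChar (x i * y i) - 1))
        = ∑ x ∈ D, ∑ S ∈ Finset.univ.powerset,
            ZMod.stdAddChar (∑ i, x i * u S i) * (-1 : ℂ) ^ (n - S.card) :=
          Finset.sum_congr rfl fun x _ => hprod x
      _ = ∑ S ∈ Finset.univ.powerset, ∑ x ∈ D,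
            ZMod.stdAddChar (∑ i, x i * u S i) * (-1 : ℂ) ^ (n - S.card) := Finset.sum_comm
      _ = ∑ S ∈ Finset.univ.powerset,
            (-1 : ℂ) ^ (n - S.card) * ∑ x ∈ D, ZMod.stdAddChar (∑ i, x i * u S i) := by
          refine Finset.sum_congr rfl fun S _ => ?_
          rw [← Finset.sum_mul, mul_comm]
      _ = _ := by
          refine Finset.sum_congr rfl fun S _ => ?_
          rw [horth (u S)]
  -- LHS reindexing
  have hcard_y : Nat.card {i : I // y i ≠ 0} = n := by
    rw [Nat.card_eq_fintype_card, Fintype.card_subtype]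
    rw [show Finset.univ.filter (fun i : I => y i ≠ 0) = Finset.univ from
      Finset.filter_true_of_mem fun i _ => hy i]
    exact Finset.card_univ
  have hcard_x : ∀ x : I → ZMod q,
      Nat.card {i : I // x i ≠ 0} = (Finset.univ.filter (fun i => x i ≠ 0)).card := by
    intro x
    rw [Nat.card_eq_fintype_card, Fintype.card_subtype]
  have hLHSsum : (∑ x ∈ Finset.univ.filter
          (fun x : I → ZMod q => x ∈ C ∧ ∀ i : I, x i = 0 ∨ x i = y i),
        (-1 : ℂ) ^ (Nat.card {i : I // y i ≠ 0} - Nat.card {i : I // x i ≠ 0}))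
      = ∑ S ∈ Finset.univ.powerset.filter (fun S => u S ∈ C),
          (-1 : ℂ) ^ (n - S.card) := by
    refine Finset.sum_nbij' (fun x => Finset.univ.filter (fun i => x i ≠ 0)) u ?_ ?_ ?_ ?_ ?_
    · intro a ha
      obtain ⟨-, haC, ha2⟩ := Finset.mem_filter.mp ha
      refine Finset.mem_filter.mpr ⟨Finset.mem_powerset.mpr (Finset.subset_univ _), ?_⟩
      have : u (Finset.univ.filter (fun i => a i ≠ 0)) = a := by
        funext j
        by_cases h0 : a j = 0
        · simp [hu, h0]
        · have hja := (ha2 j).resolve_left h0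
          simp only [hu, Finset.mem_filter, Finset.mem_univ, true_and]
          rw [if_pos h0, ← hja]
      rw [this]; exact haC
    · intro S hS
      have hSC := (Finset.mem_filter.mp hS).2
      refine Finset.mem_filter.mpr ⟨Finset.mem_univ _, hSC, fun i => ?_⟩
      by_cases hiS : i ∈ S
      · right; simp [hu, hiS]
      · left; simp [hu, hiS]
    · intro a ha
      have ha2 := (Finset.mem_filter.mp ha).2.2
      funext j
      by_cases h0 : a j = 0
      · simp [hu, h0]
      · have hja := (ha2 j).resolve_left h0
        simp only [hu, Finset.mem_filter, Finset.mem_univ, true_and]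
        rw [if_pos h0, ← hja]
    · intro S hS
      ext j
      simp only [Finset.mem_filter, Finset.mem_univ, true_and, hu]
      by_cases hjS : j ∈ S
      · simp [hjS, hy j]
      · simp [hjS]
    · intro a ha
      rw [hcard_y, hcard_x a]
  -- assemble
  calc ((Finset.univ.filter
        (fun x : I → ZMod q => ∀ z ∈ C, ∑ i : I, z i * x i = 0)).card : ℂ) *
      ∑ x ∈ Finset.univ.filter
          (fun x : I → ZMod q => x ∈ C ∧ ∀ i : I, x i = 0 ∨ x i = y i),
        (-1 : ℂ) ^ (Nat.card {i : I // y i ≠ 0} - Nat.card {i : I // x i ≠ 0})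
      = (D.card : ℂ) * ∑ S ∈ Finset.univ.powerset.filter (fun S => u S ∈ C),
          (-1 : ℂ) ^ (n - S.card) := by rw [hLHSsum]
    _ = ∑ S ∈ Finset.univ.powerset,
          (-1 : ℂ) ^ (n - S.card) * (if u S ∈ C then (D.card : ℂ) else 0) := by
        rw [Finset.sum_filter, Finset.mul_sum]
        refine Finset.sum_congr rfl fun S _ => ?_
        split_ifs <;> ring
    _ = ∑ x ∈ D, ∏ i, (ZMod.stdAddChar (x i * y i) - 1) := hRHS.symm
    _ = _ := by
        refine Finset.sum_congr rfl fun x _ => Finset.prod_congr rfl fun i _ => ?_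
        rw [aux_char_val]
end

section
/- Let q ≥ 1, let I be a finite set, let C be a ℤ/qℤ-submodule of (ℤ/qℤ)^I, and let C^⊥ = {y ∈ (ℤ/qℤ)^I : ∑_{i∈I} x_i y_i = 0 for all x ∈ C}. Then ∑_{y} ∑_{x ∈ C, x ≤ y} (−1)^{|y| − |x|} = (−1)^{|I|} · |C| · #{x ∈ C^⊥ : x_i ≠ 0 for all i ∈ I}, where the outer sum is over all y ∈ (ℤ/qℤ)^I with y_i ≠ 0 for every i ∈ I. -/
open Finset

private lemma addChar_map_sum' {M : Type*} [CommMonoid M] {A : Type*} [AddCommMonoid A]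
    (ψ : AddChar A M) {ι : Type*} (s : Finset ι) (f : ι → A) :
    ψ (∑ i ∈ s, f i) = ∏ i ∈ s, ψ (f i) := by
  classical
  induction s using Finset.induction_on with
  | empty => simp
  | insert _ _ h ih => rw [Finset.sum_insert h, Finset.prod_insert h, AddChar.map_add_eq_mul, ih]

open Classical in
private lemma sum_char_submodule {I : Type*} [Fintype I] [DecidableEq I] (q : ℕ) [NeZero q]
    (C : Submodule (ZMod q) (I → ZMod q)) (u : I → ZMod q) :
    ∑ x ∈ Finset.univ.filter (fun x : I → ZMod q => x ∈ C),
      ZMod.stdAddChar (∑ i : I, x i * u i)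
      = if (∀ z ∈ C, ∑ i : I, z i * u i = 0) then
          ((Finset.univ.filter (fun x : I → ZMod q => x ∈ C)).card : ℂ) else 0 := by
  classical
  set ψ := ZMod.stdAddChar (N := q)
  by_cases h : ∀ z ∈ C, ∑ i : I, z i * u i = 0
  · rw [if_pos h]
    rw [Finset.sum_congr rfl (fun x hx => by
      rw [h x (by simpa using hx), AddChar.map_zero_eq_one])]
    simp
  · rw [if_neg h]
    push_neg at h
    obtain ⟨z0, hz0C, hz0⟩ := h
    set S := ∑ x ∈ Finset.univ.filter (fun x : I → ZMod q => x ∈ C),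
      ψ (∑ i : I, x i * u i) with hS
    set c := ∑ i : I, z0 i * u i with hc
    have hshift : ∑ x ∈ Finset.univ.filter (fun x : I → ZMod q => x ∈ C),
        ψ (∑ i : I, (x i + z0 i) * u i) = S := by
      refine Finset.sum_nbij' (fun x => x + z0) (fun x => x - z0) ?_ ?_ ?_ ?_ ?_
      · intro x hx; simp only [mem_filter, mem_univ, true_and] at hx ⊢
        exact C.add_mem hx hz0C
      · intro x hx; simp only [mem_filter, mem_univ, true_and] at hx ⊢
        exact C.sub_mem hx hz0C
      · intro x _; simp
      · intro x _; simp
      · intro x _; rfl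
    have hexp : ∀ x : I → ZMod q, ψ (∑ i : I, (x i + z0 i) * u i)
        = ψ (∑ i : I, x i * u i) * ψ c := by
      intro x
      have : ∑ i : I, (x i + z0 i) * u i = (∑ i : I, x i * u i) + c := by
        rw [hc, ← Finset.sum_add_distrib]
        exact Finset.sum_congr rfl fun i _ => by ring
      rw [this, AddChar.map_add_eq_mul]
    rw [Finset.sum_congr rfl (fun x _ => hexp x)] at hshift
    rw [← Finset.sum_mul] at hshift
    have hψc : ψ c ≠ 1 := by
      intro hone
      apply hz0
      have := ZMod.injective_stdAddChar (N := q)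
      exact this (by rw [hone, AddChar.map_zero_eq_one] : ψ c = ψ 0)
    have : S * (ψ c - 1) = 0 := by rw [mul_sub, mul_one, hshift, sub_self]
    rcases mul_eq_zero.1 this with h' | h'
    · exact h'
    · exact absurd (by linear_combination h' : ψ c = 1) hψc

open Classical in
theorem stmt_16 {I : Type*} [Fintype I] [DecidableEq I] (q : ℕ) [NeZero q] (hq : 1 ≤ q)
    (C : Submodule (ZMod q) (I → ZMod q)) :
    ∑ y ∈ Finset.univ.filter (fun y : I → ZMod q => ∀ i : I, y i ≠ 0),
        ∑ x ∈ Finset.univ.filter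
            (fun x : I → ZMod q => x ∈ C ∧ ∀ i : I, x i = 0 ∨ x i = y i),
          (-1 : ℤ) ^ (Nat.card {i : I // y i ≠ 0} - Nat.card {i : I // x i ≠ 0}) =
      (-1 : ℤ) ^ Fintype.card I *
        ((Finset.univ.filter (fun x : I → ZMod q => x ∈ C)).card : ℤ) *
        ((Finset.univ.filter (fun x : I → ZMod q =>
            (∀ z ∈ C, ∑ i : I, z i * x i = 0) ∧ ∀ i : I, x i ≠ 0)).card : ℤ) := by
  classical
  set n := Fintype.card I with hn
  set w : (I → ZMod q) → ℕ := fun x => (univ.filter fun i => x i ≠ 0).card with hwdef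
  have hcardsub : ∀ x : I → ZMod q, Nat.card {i : I // x i ≠ 0} = w x := fun x => by
    rw [Nat.card_eq_fintype_card, Fintype.card_subtype]
  have hwle : ∀ x : I → ZMod q, w x ≤ n := fun x => by
    simpa [hn] using Finset.card_filter_le univ (fun i => x i ≠ 0)
  set Cf := Finset.univ.filter (fun x : I → ZMod q => x ∈ C) with hCf
  set U := Finset.univ.filter (fun y : I → ZMod q => ∀ i : I, y i ≠ 0) with hU
  -- counting lemma
  have count : ∀ x : I → ZMod q,
      (U.filter (fun y => ∀ i : I, x i = 0 ∨ x i = y i)).card = (q - 1) ^ (n - w x) := by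
    intro x
    have hset : U.filter (fun y => ∀ i : I, x i = 0 ∨ x i = y i)
        = Fintype.piFinset (fun i =>
            univ.filter (fun t : ZMod q => t ≠ 0 ∧ (x i = 0 ∨ x i = t))) := by
      ext y
      simp only [hU, Finset.mem_filter, Finset.mem_univ, true_and, Fintype.mem_piFinset]
      exact ⟨fun h i => ⟨h.1 i, h.2 i⟩, fun h => ⟨fun i => (h i).1, fun i => (h i).2⟩⟩
    rw [hset, Fintype.card_piFinset]
    have hcard : ∀ i : I, (univ.filter (fun t : ZMod q => t ≠ 0 ∧ (x i = 0 ∨ x i = t))).card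
        = if x i = 0 then q - 1 else 1 := by
      intro i
      by_cases h : x i = 0
      · rw [if_pos h]
        have : (univ.filter (fun t : ZMod q => t ≠ 0 ∧ (x i = 0 ∨ x i = t)))
            = univ.filter (fun t : ZMod q => t ≠ 0) := by
          ext t; simp [h]
        rw [this, Finset.filter_ne', Finset.card_erase_of_mem (mem_univ 0),
          Finset.card_univ, ZMod.card]
      · rw [if_neg h]
        have : (univ.filter (fun t : ZMod q => t ≠ 0 ∧ (x i = 0 ∨ x i = t))) = {x i} := by
          ext t
          simp only [Finset.mem_filter, Finset.mem_univ, true_and, Finset.mem_singleton]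
          constructor
          · rintro ⟨_, h2 | h2⟩
            · exact absurd h2 h
            · exact h2.symm
          · rintro rfl; exact ⟨h, Or.inr rfl⟩
        rw [this, Finset.card_singleton]
    rw [Finset.prod_congr rfl (fun i _ => hcard i), Finset.prod_ite, Finset.prod_const,
      Finset.prod_const, one_pow, mul_one]
    congr 1
    have h1 : (univ.filter fun i => x i = 0).card + w x = n := by
      rw [hwdef, hn]
      have := Finset.card_filter_add_card_filter_not (s := univ)
        (p := fun i : I => x i = 0)
      simpa [Finset.card_univ] using this
    omega
  -- Step A : rewrite LHS
  have stepA : ∑ y ∈ U, ∑ x ∈ Finset.univ.filter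
        (fun x : I → ZMod q => x ∈ C ∧ ∀ i : I, x i = 0 ∨ x i = y i),
        (-1 : ℤ) ^ (Nat.card {i : I // y i ≠ 0} - Nat.card {i : I // x i ≠ 0})
      = ∑ x ∈ Cf, ((q - 1 : ℕ) ^ (n - w x) : ℤ) * (-1) ^ (n - w x) := by
    have hy : ∀ y ∈ U, Nat.card {i : I // y i ≠ 0} = n := by
      intro y hy
      rw [hcardsub]
      simp only [hU, Finset.mem_filter] at hy
      rw [hwdef, hn]
      simp [Finset.filter_true_of_mem (fun i _ => hy.2 i)]
    calc ∑ y ∈ U, ∑ x ∈ Finset.univ.filter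
          (fun x : I → ZMod q => x ∈ C ∧ ∀ i : I, x i = 0 ∨ x i = y i),
          (-1 : ℤ) ^ (Nat.card {i : I // y i ≠ 0} - Nat.card {i : I // x i ≠ 0})
        = ∑ y ∈ U, ∑ x ∈ Cf, if (∀ i : I, x i = 0 ∨ x i = y i) then
            (-1 : ℤ) ^ (n - w x) else 0 := by
          refine Finset.sum_congr rfl fun y hyU => ?_
          rw [← Finset.sum_filter]
          have : Finset.univ.filter (fun x : I → ZMod q => x ∈ C ∧ ∀ i : I, x i = 0 ∨ x i = y i)
              = Cf.filter (fun x => ∀ i : I, x i = 0 ∨ x i = y i) := by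
            ext x; simp [hCf, and_assoc]
          rw [this]
          exact Finset.sum_congr rfl fun x _ => by rw [hy y hyU, hcardsub]
      _ = ∑ x ∈ Cf, ∑ y ∈ U, if (∀ i : I, x i = 0 ∨ x i = y i) then
            (-1 : ℤ) ^ (n - w x) else 0 := Finset.sum_comm
      _ = ∑ x ∈ Cf, ((q - 1 : ℕ) ^ (n - w x) : ℤ) * (-1) ^ (n - w x) := by
          refine Finset.sum_congr rfl fun x _ => ?_
          rw [← Finset.sum_filter, Finset.sum_const, count x, nsmul_eq_mul]
          push_cast
          ring
  rw [stepA]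
  -- key identity over ℤ via ℂ
  set Ncard := (Finset.univ.filter (fun x : I → ZMod q =>
      (∀ z ∈ C, ∑ i : I, z i * x i = 0) ∧ ∀ i : I, x i ≠ 0)).card with hNcard
  have key : ∑ x ∈ Cf, ∏ i : I, (if x i = 0 then ((q : ℤ) - 1) else -1)
      = (Cf.card : ℤ) * Ncard := by
    have keyC : ∑ x ∈ Cf, ∏ i : I, (if x i = 0 then ((q : ℂ) - 1) else -1)
        = (Cf.card : ℂ) * Ncard := by
      set ψ := ZMod.stdAddChar (N := q)
      have hg : ∀ t : ZMod q, (if t = 0 then ((q : ℂ) - 1) else -1)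
          = ∑ u ∈ univ.filter (fun u : ZMod q => u ≠ 0), ψ (t * u) := by
        intro t
        have h0 : ∑ u : ZMod q, ψ (t * u) = if t = 0 then (q : ℂ) else 0 := by
          have := AddChar.sum_mulShift t (ZMod.isPrimitive_stdAddChar q)
          simp_rw [mul_comm] at this
          simpa [ZMod.card] using this
        rw [Finset.filter_ne', Finset.sum_erase_eq_sub (mem_univ 0), h0]
        by_cases h : t = 0 <;> simp [h]
      calc ∑ x ∈ Cf, ∏ i : I, (if x i = 0 then ((q : ℂ) - 1) else -1)
          = ∑ x ∈ Cf, ∑ u ∈ Fintype.piFinset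
              (fun _ : I => univ.filter (fun u : ZMod q => u ≠ 0)),
              ∏ i : I, ψ (x i * u i) := by
            refine Finset.sum_congr rfl fun x _ => ?_
            calc ∏ i : I, (if x i = 0 then ((q : ℂ) - 1) else -1)
                = ∏ i : I, ∑ u ∈ univ.filter (fun u : ZMod q => u ≠ 0), ψ (x i * u) :=
                  Finset.prod_congr rfl fun i _ => hg (x i)
              _ = _ := Finset.prod_univ_sum _ _
        _ = ∑ u ∈ Fintype.piFinset (fun _ : I => univ.filter (fun u : ZMod q => u ≠ 0)),
              ∑ x ∈ Cf, ψ (∑ i : I, x i * u i) := by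
            rw [Finset.sum_comm]
            refine Finset.sum_congr rfl fun u _ => Finset.sum_congr rfl fun x _ => ?_
            rw [addChar_map_sum']
        _ = ∑ u ∈ Fintype.piFinset (fun _ : I => univ.filter (fun u : ZMod q => u ≠ 0)),
              if (∀ z ∈ C, ∑ i : I, z i * u i = 0) then (Cf.card : ℂ) else 0 := by
            exact Finset.sum_congr rfl fun u _ => sum_char_submodule q C u
        _ = (Cf.card : ℂ) * Ncard := by
            have hUeq : (Fintype.piFinset (fun _ : I =>
                  univ.filter (fun u : ZMod q => u ≠ 0))).filter
                  (fun u => ∀ z ∈ C, ∑ i : I, z i * u i = 0)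
                = Finset.univ.filter (fun x : I → ZMod q =>
                  (∀ z ∈ C, ∑ i : I, z i * x i = 0) ∧ ∀ i : I, x i ≠ 0) := by
              ext u
              simp only [Fintype.mem_piFinset, Finset.mem_filter, Finset.mem_univ, true_and]
              tauto
            rw [← Finset.sum_filter, Finset.sum_const, nsmul_eq_mul, hUeq, ← hNcard, mul_comm]
    have hcast : ((∑ x ∈ Cf, ∏ i : I, (if x i = 0 then ((q : ℤ) - 1) else -1) : ℤ) : ℂ)
        = ((Cf.card : ℤ) * (Ncard : ℤ) : ℂ) := by
      push_cast
      rw [← keyC]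
    exact_mod_cast hcast
  -- relate products to signs
  have hprod : ∀ x : I → ZMod q, ∏ i : I, (if x i = 0 then ((q : ℤ) - 1) else -1)
      = ((q : ℤ) - 1) ^ (n - w x) * (-1) ^ (w x) := by
    intro x
    rw [Finset.prod_ite, Finset.prod_const, Finset.prod_const]
    have h2 : (univ.filter fun i => ¬ x i = 0).card = w x := by
      rw [hwdef]
    have h1 : (univ.filter fun i => x i = 0).card = n - w x := by
      have h3 : (univ.filter fun i => x i = 0).card + w x = n := by
        rw [hwdef, hn]
        have := Finset.card_filter_add_card_filter_not (s := univ)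
          (p := fun i : I => x i = 0)
        simpa [Finset.card_univ] using this
      exact Nat.eq_sub_of_add_eq h3
    rw [h1, h2]
  -- finish
  have hfin : ∑ x ∈ Cf, ((q - 1 : ℕ) ^ (n - w x) : ℤ) * (-1) ^ (n - w x)
      = (-1 : ℤ) ^ n * ∑ x ∈ Cf, ∏ i : I, (if x i = 0 then ((q : ℤ) - 1) else -1) := by
    rw [Finset.mul_sum]
    refine Finset.sum_congr rfl fun x _ => ?_
    rw [hprod x]
    have hcast : ((q - 1 : ℕ) : ℤ) = (q : ℤ) - 1 := by
      have := Nat.cast_sub hq (R := ℤ); simpa using this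
    rw [hcast]
    have hsign : (-1 : ℤ) ^ (n - w x) = (-1) ^ n * (-1) ^ (w x) := by
      have h1 : (-1 : ℤ) ^ (n - w x) * (-1) ^ (w x) = (-1) ^ n := by
        rw [← pow_add, Nat.sub_add_cancel (hwle x)]
      have h2 : ((-1 : ℤ) ^ (w x)) * ((-1) ^ (w x)) = 1 := by
        rw [← pow_add]; simp [pow_add, ← two_mul]
      calc (-1 : ℤ) ^ (n - w x) = (-1) ^ (n - w x) * ((-1) ^ (w x) * (-1) ^ (w x)) := by
            rw [h2, mul_one]
        _ = (-1) ^ n * (-1) ^ (w x) := by rw [← mul_assoc, h1]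
    rw [hsign]; ring
  rw [hfin, key]
  ring
end
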